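/- arXiv:2401.17750 — 8 statements merged into one kernel-verified Lean document; each statement's English description precedes it below -/
import Mathlib

section
/- For every natural number n ≥ 1, the determinant of the n×n matrix whose (ℓ,m)-entry (for ℓ,m ∈ {0,...,n-1}) is ∑_{k=0}^{m} C(ℓ,2k)·C(2n-ℓ, 2(m-k)+1) equals (-1)^{n(n-1)/2} · 2^{n(n-1)+1}. -/
namespace DetAEvenAux

open Polynomial Finset

noncomputable def od : ℤ[X] →ₗ[ℤ] ℤ[X] where
  toFun p := Polynomial.contract 2 p.divX
  map_add' p q := by
    ext m
    simp [Polynomial.coeff_contract (two_ne_zero), Polynomial.coeff_divX]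
  map_smul' c p := by
    ext m
    simp [Polynomial.coeff_contract (two_ne_zero), Polynomial.coeff_divX]

lemma od_coeff (p : ℤ[X]) (m : ℕ) : (od p).coeff m = p.coeff (2 * m + 1) := by
  show (Polynomial.contract 2 p.divX).coeff m = _
  rw [Polynomial.coeff_contract (two_ne_zero), Polynomial.coeff_divX]
  ring_nf

noncomputable def u : ℤ[X] := 1 + X
noncomputable def v : ℤ[X] := 1 - X

lemma coeff_u_pow (a k : ℕ) : (u ^ a).coeff k = (a.choose k : ℤ) :=
  Polynomial.coeff_one_add_X_pow ℤ a k

-- odd part of (even poly) * p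
lemma od_expand_mul (g p : ℤ[X]) : od (Polynomial.expand ℤ 2 g * p) = g * od p := by
  induction g using Polynomial.induction_on' with
  | add f g hf hg => rw [map_add, add_mul, map_add, hf, hg, add_mul]
  | monomial a c =>
      rw [Polynomial.expand_monomial]
      ext m
      rw [od_coeff, Polynomial.C_mul_X_pow_eq_monomial.symm, Polynomial.C_mul_X_pow_eq_monomial.symm]
      rw [mul_assoc, mul_assoc, Polynomial.coeff_C_mul, Polynomial.coeff_C_mul]
      rw [Nat.mul_comm a 2, show (X:ℤ[X])^(2*a) * p = p * X^(2*a) from mul_comm _ _,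
        show (X:ℤ[X])^a * od p = od p * X^a from mul_comm _ _]
      rw [Polynomial.coeff_mul_X_pow', Polynomial.coeff_mul_X_pow']
      by_cases h : a ≤ m
      · rw [if_pos (by omega), if_pos h, od_coeff]
        congr 2
        omega
      · rw [if_neg (by omega), if_neg h]

lemma coeff_v_pow (a k : ℕ) : (v ^ a).coeff k = (-1)^k * (a.choose k : ℤ) := by
  have hv : v = (-X) + 1 := by unfold v; ring
  rw [hv, add_pow, Polynomial.finset_sum_coeff]
  have hterm : ∀ b, (-X:ℤ[X])^b * 1^(a-b) * (a.choose b : ℤ[X]) =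
      Polynomial.C ((-1)^b * (a.choose b : ℤ)) * X^b := by
    intro b
    rw [map_mul, Polynomial.C_eq_natCast, map_pow, map_neg, Polynomial.C_1]
    ring
  rw [Finset.sum_congr rfl (fun b _ => by rw [hterm b, Polynomial.coeff_C_mul, Polynomial.coeff_X_pow])]
  rw [Finset.sum_eq_single k]
  · rw [if_pos rfl, mul_one]
  · intro b _ hbk
    rw [if_neg (fun h => hbk h.symm), mul_zero]
  · intro hk
    rw [Finset.mem_range, not_lt] at hk
    rw [Nat.choose_eq_zero_of_lt (by omega)]
    simp

-- even part decomposition of u^a + v^a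
lemma u_add_v_pow (a : ℕ) :
    u ^ a + v ^ a = Polynomial.expand ℤ 2 (2 • Polynomial.contract 2 (u ^ a)) := by
  ext k
  rw [Polynomial.coeff_add, coeff_u_pow, coeff_v_pow,
    Polynomial.coeff_expand (by norm_num : 0 < 2)]
  rcases Nat.even_or_odd k with ⟨a, ha⟩ | ⟨a, ha⟩
  · rw [if_pos ⟨a, by omega⟩]
    rw [(Even.neg_one_pow ⟨a, ha⟩ : ((-1:ℤ))^k = 1), one_mul]
    rw [Polynomial.coeff_smul, Polynomial.coeff_contract (two_ne_zero)]
    rw [coeff_u_pow]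
    rw [show k / 2 * 2 = k from by omega]
    push_cast
    ring
  · rw [if_neg (by omega : ¬ 2 ∣ k), (Odd.neg_one_pow ⟨a, by omega⟩ : ((-1:ℤ))^k = -1)]
    ring

-- evaluation of odd part at 1
lemma od_eval_one (p : ℤ[X]) : 2 * (od p).eval 1 = p.eval 1 - p.eval (-1) := by
  induction p using Polynomial.induction_on' with
  | add f g hf hg => rw [map_add, Polynomial.eval_add, mul_add, hf, hg,
      Polynomial.eval_add, Polynomial.eval_add]; ring
  | monomial k c =>
      rcases Nat.even_or_odd k with ⟨a, ha⟩ | ⟨a, ha⟩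
      · have h0 : od (Polynomial.monomial k c) = 0 := by
          ext m
          rw [od_coeff, Polynomial.coeff_monomial, if_neg (by omega), Polynomial.coeff_zero]
        rw [h0, Polynomial.eval_zero, mul_zero, Polynomial.eval_monomial,
          Polynomial.eval_monomial, show k = 2*a from by omega]
        rw [show ((-1:ℤ))^(2*a) = 1 from by rw [pow_mul]; norm_num]
        ring
      · have h0 : od (Polynomial.monomial k c) = Polynomial.monomial a c := by
          ext m
          rw [od_coeff, Polynomial.coeff_monomial, Polynomial.coeff_monomial]
          by_cases hma : m = a
          · rw [if_pos (by omega), if_pos hma.symm]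
          · rw [if_neg (by omega), if_neg (fun h => hma h.symm)]
        rw [h0, Polynomial.eval_monomial, Polynomial.eval_monomial, Polynomial.eval_monomial,
          show k = 2*a+1 from by omega]
        rw [show ((-1:ℤ))^(2*a+1) = -1 from by rw [pow_succ, pow_mul]; norm_num]
        ring

-- the key summation lemma (★)
lemma star (n : ℕ) (s : ℤ[X]) (hs : s.natDegree < n) (m : ℕ) :
    ∑ j ∈ Finset.range n, s.coeff j * (od (X ^ j * u ^ (n+1))).coeff m
      = (od (s * u ^ (n+1))).coeff m := by
  conv_rhs => rw [Polynomial.as_sum_range' s n hs]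
  rw [Finset.sum_mul, map_sum]
  rw [Polynomial.finset_sum_coeff]
  refine Finset.sum_congr rfl fun j _ => ?_
  rw [← Polynomial.C_mul_X_pow_eq_monomial, mul_assoc, ← Polynomial.smul_eq_C_mul,
    map_smul, Polynomial.coeff_smul]
  simp [mul_comm]

lemma u_ne_zero : u ≠ 0 := fun h => by
  have h2 : u.coeff 1 = 1 := by unfold u; simp [Polynomial.coeff_one]
  rw [h, Polynomial.coeff_zero] at h2
  exact one_ne_zero h2.symm

lemma natDegree_u_pow_le (a : ℕ) : (u ^ a).natDegree ≤ a := by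
  refine le_trans (Polynomial.natDegree_pow_le) ?_
  have : u.natDegree ≤ 1 := le_trans (Polynomial.natDegree_add_le _ _) (by simp)
  exact le_trans (Nat.mul_le_mul_left a this) (by omega)

lemma natDegree_v_pow_le (a : ℕ) : (v ^ a).natDegree ≤ a := by
  refine le_trans (Polynomial.natDegree_pow_le) ?_
  have : v.natDegree ≤ 1 := le_trans (Polynomial.natDegree_sub_le _ _) (by simp)
  exact le_trans (Nat.mul_le_mul_left a this) (by omega)

-- the entry identity: 2 * A(ℓ,m) as an odd-part coefficient
lemma entry2A (n ℓ m : ℕ) (hl : ℓ < n) :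
    (2:ℤ) * (∑ k ∈ Finset.range (m + 1),
        ℓ.choose (2 * k) * (2 * n - ℓ).choose (2 * (m - k) + 1) : ℕ)
      = (od (u ^ (2*n) + v ^ ℓ * u ^ (2*n - ℓ))).coeff m := by
  have h1 : u ^ (2*n) + v ^ ℓ * u ^ (2*n - ℓ)
      = Polynomial.expand ℤ 2 (2 • Polynomial.contract 2 (u ^ ℓ)) * u ^ (2*n - ℓ) := by
    rw [← u_add_v_pow, add_mul, ← pow_add, show ℓ + (2*n - ℓ) = 2*n from by omega]
  rw [h1, od_expand_mul, smul_mul_assoc, Polynomial.coeff_smul, nsmul_eq_mul]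
  push_cast
  congr 1
  rw [Polynomial.coeff_mul, Finset.Nat.sum_antidiagonal_eq_sum_range_succ_mk]
  push_cast
  refine Finset.sum_congr rfl fun k _ => ?_
  rw [Polynomial.coeff_contract (two_ne_zero), od_coeff, coeff_u_pow, coeff_u_pow,
    show k * 2 = 2 * k from by omega]

noncomputable def q (j : ℕ) : ℤ[X] := od (X ^ j * u ^ (j+2))

lemma q_natDegree_le (j : ℕ) : (q j).natDegree ≤ j := by
  refine Polynomial.natDegree_le_iff_coeff_eq_zero.mpr fun m hm => ?_
  rw [q, od_coeff]
  refine Polynomial.coeff_eq_zero_of_natDegree_lt ?_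
  refine lt_of_le_of_lt (le_trans (Polynomial.natDegree_mul_le) ?_) (show j + (j+2) < 2*m+1 from by omega)
  have := natDegree_u_pow_le (j+2)
  simp only [Polynomial.natDegree_X_pow]
  omega

lemma q_eval_one (j : ℕ) : (q j).eval 1 = 2 ^ (j+1) := by
  have h := od_eval_one (X ^ j * u ^ (j+2))
  rw [Polynomial.eval_mul, Polynomial.eval_mul, Polynomial.eval_pow, Polynomial.eval_pow,
    Polynomial.eval_pow, Polynomial.eval_pow, Polynomial.eval_X, Polynomial.eval_X] at h
  have hu1 : u.eval 1 = 2 := by unfold u; simp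
  have hum : u.eval (-1) = 0 := by unfold u; simp
  rw [hu1, hum] at h
  have : 2 * (q j).eval 1 = 2 * 2 ^ (j+1) := by
    rw [q, h]; ring
  exact mul_left_cancel₀ two_ne_zero this

-- homogenization-style map
noncomputable def theta (M : ℕ) (p : ℤ[X]) : ℤ[X] :=
  ∑ m ∈ Finset.range (M+1), Polynomial.C (p.coeff m) * (X ^ m * u ^ (M - m))

lemma theta_coeff (M : ℕ) (p : ℤ[X]) (i : ℕ) :
    (theta M p).coeff i = ∑ m ∈ Finset.range (M+1), p.coeff m * (X ^ m * u ^ (M - m)).coeff i := by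
  rw [theta, Polynomial.finset_sum_coeff]
  exact Finset.sum_congr rfl fun m _ => Polynomial.coeff_C_mul _

lemma theta_map (M : ℕ) (p : ℤ[X]) (hp : p.natDegree < M + 1) :
    algebraMap ℤ[X] (FractionRing ℤ[X]) (theta M p)
      = (algebraMap ℤ[X] (FractionRing ℤ[X]) u) ^ M *
        Polynomial.eval₂ (Int.castRingHom (FractionRing ℤ[X]))
          (algebraMap ℤ[X] (FractionRing ℤ[X]) X / algebraMap ℤ[X] (FractionRing ℤ[X]) u) p := by
  set K := FractionRing ℤ[X]
  set ι := algebraMap ℤ[X] K with hι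
  have hu : ι u ≠ 0 := by
    rw [map_ne_zero_iff ι (IsFractionRing.injective ℤ[X] K)]
    exact u_ne_zero
  rw [Polynomial.eval₂_eq_sum_range' _ hp, theta, map_sum, Finset.mul_sum]
  refine Finset.sum_congr rfl fun m hm => ?_
  rw [Finset.mem_range] at hm
  have hC : ι (Polynomial.C (p.coeff m)) = (Int.castRingHom K) (p.coeff m) := by
    rw [show Polynomial.C (p.coeff m) = ((p.coeff m : ℤ[X])) from by simp, map_intCast]
    simp
  rw [map_mul, map_mul, map_pow, map_pow, hC, div_pow,
    pow_sub₀ (ι u) hu (by omega : m ≤ M), div_eq_mul_inv]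
  ring

set_option synthInstance.maxHeartbeats 1000000 in
lemma theta_v_mul (a b : ℕ) (p : ℤ[X]) (hp : p.natDegree ≤ b) :
    theta (a + b) (v ^ a * p) = theta b p := by
  set K := FractionRing ℤ[X]
  set ι := algebraMap ℤ[X] K with hι
  have hinj : Function.Injective ι := IsFractionRing.injective ℤ[X] K
  have hu : ι u ≠ 0 := by
    rw [map_ne_zero_iff ι hinj]
    exact u_ne_zero
  apply hinj
  have hdeg : (v ^ a * p).natDegree < a + b + 1 := by
    have h1 := Polynomial.natDegree_mul_le (p := v ^ a) (q := p)
    have h2 := natDegree_v_pow_le a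
    omega
  rw [theta_map _ _ hdeg, theta_map _ _ (by omega)]
  rw [Polynomial.eval₂_mul, Polynomial.eval₂_pow]
  have hv : Polynomial.eval₂ (Int.castRingHom K) (ι X / ι u) v = (ι u)⁻¹ := by
    have : v = 1 - X := rfl
    rw [this, Polynomial.eval₂_sub, Polynomial.eval₂_one, Polynomial.eval₂_X]
    rw [show (1:K) - ι X / ι u = (ι u - ι X)/ι u from by rw [sub_div, div_self hu], ← map_sub,
      show u - X = 1 from by unfold u; ring, map_one, one_div]
  rw [hv, inv_pow, pow_add]
  field_simp
  ring
lemma theta_coeff_eq_zero_of_lt (M : ℕ) (p : ℤ[X]) (i : ℕ) (hi : M < i) :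
    (theta M p).coeff i = 0 := by
  rw [theta_coeff]
  refine Finset.sum_eq_zero fun m hm => ?_
  rw [Finset.mem_range] at hm
  refine mul_eq_zero_of_right _ (Polynomial.coeff_eq_zero_of_natDegree_lt ?_)
  have h1 := Polynomial.natDegree_mul_le (p := (X:ℤ[X]) ^ m) (q := u ^ (M - m))
  have h2 := natDegree_u_pow_le (M - m)
  have h3 : ((X:ℤ[X]) ^ m).natDegree = m := Polynomial.natDegree_X_pow m
  omega

lemma theta_coeff_self (M : ℕ) (p : ℤ[X]) (hp : p.natDegree < M + 1) :
    (theta M p).coeff M = p.eval 1 := by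
  rw [theta_coeff, Polynomial.eval_eq_sum_range' hp 1]
  refine Finset.sum_congr rfl fun m hm => ?_
  rw [Finset.mem_range] at hm
  have hc : ((X:ℤ[X]) ^ m * u ^ (M - m)).coeff M = 1 := by
    rw [mul_comm, Polynomial.coeff_mul_X_pow', if_pos (by omega : m ≤ M), coeff_u_pow,
      Nat.choose_self]
    norm_num
  rw [hc, mul_one, one_pow, mul_one]

open Matrix in
noncomputable def matA (n : ℕ) : Matrix (Fin n) (Fin n) ℤ :=
  Matrix.of fun ℓ m : Fin n =>
    ((∑ k ∈ Finset.range (m.1 + 1),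
        (ℓ.1).choose (2 * k) * (2 * n - ℓ.1).choose (2 * (m.1 - k) + 1) : ℕ) : ℤ)

noncomputable def matT (n : ℕ) : Matrix (Fin n) (Fin n) ℤ :=
  Matrix.of fun ℓ j : Fin n => (if j = ℓ then (1:ℤ) else 0) + (if j.1 = 0 then 1 else 0)

noncomputable def matS (n : ℕ) : Matrix (Fin n) (Fin n) ℤ :=
  Matrix.of fun ℓ j : Fin n => (v ^ ℓ.1 * u ^ (n - 1 - ℓ.1)).coeff j.1

noncomputable def matB (n : ℕ) : Matrix (Fin n) (Fin n) ℤ :=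
  Matrix.of fun j m : Fin n => (od ((X:ℤ[X]) ^ j.1 * u ^ (n+1))).coeff m.1

noncomputable def matD2 (n : ℕ) : Matrix (Fin n) (Fin n) ℤ :=
  Matrix.of fun ℓ i : Fin n => ((ℓ.1.choose i.1 : ℤ) * (-2)^i.1)

noncomputable def coeffMat (n : ℕ) (f : ℕ → ℤ[X]) : Matrix (Fin n) (Fin n) ℤ :=
  Matrix.of fun i j : Fin n => ((X:ℤ[X]) ^ i.1 * f i.1).coeff j.1

noncomputable def matU2 (n : ℕ) : Matrix (Fin n) (Fin n) ℤ :=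
  coeffMat n (fun i => u ^ (n - 1 - i))

noncomputable def matW (n : ℕ) : Matrix (Fin n) (Fin n) ℤ :=
  coeffMat n (fun j => v ^ (n - 1 - j))

noncomputable def matV (n : ℕ) : Matrix (Fin n) (Fin n) ℤ :=
  Matrix.of fun j m : Fin n => (v ^ (n - 1 - j.1) * q j.1).coeff m.1

-- (I1)
lemma I1 (n : ℕ) (hn : 1 ≤ n) : (2:ℤ) • matA n = matT n * matS n * matB n := by
  ext ℓ m
  have hSB : ∀ a : Fin n, (matS n * matB n) a m
      = (od (v ^ a.1 * u ^ (2*n - a.1))).coeff m.1 := by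
    intro a
    rw [Matrix.mul_apply]
    have : ∀ k : Fin n, matS n a k * matB n k m
        = (v ^ a.1 * u ^ (n - 1 - a.1)).coeff k.1 * (od ((X:ℤ[X]) ^ k.1 * u ^ (n+1))).coeff m.1 :=
      fun k => rfl
    rw [Finset.sum_congr rfl (fun k _ => this k), Fin.sum_univ_eq_sum_range
      (fun k => (v ^ a.1 * u ^ (n - 1 - a.1)).coeff k * (od ((X:ℤ[X]) ^ k * u ^ (n+1))).coeff m.1)]
    rw [star n _ ?_ m.1]
    · have ha := a.2
      rw [mul_assoc, ← pow_add, show n - 1 - a.1 + (n + 1) = 2 * n - a.1 from by omega]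
    · have h1 := Polynomial.natDegree_mul_le (p := v ^ a.1) (q := u ^ (n - 1 - a.1))
      have h2 := natDegree_v_pow_le a.1
      have h3 := natDegree_u_pow_le (n - 1 - a.1)
      have := a.2
      omega
  rw [Matrix.mul_assoc, Matrix.smul_apply, Matrix.mul_apply]
  have hT : ∀ k : Fin n, matT n ℓ k * (matS n * matB n) k m
      = (if k = ℓ then (1:ℤ) else 0) * (matS n * matB n) k m
        + (if k = (⟨0, hn⟩ : Fin n) then (1:ℤ) else 0) * (matS n * matB n) k m := by
    intro k
    rw [show matT n ℓ k = (if k = ℓ then (1:ℤ) else 0) + (if k.1 = 0 then 1 else 0) from rfl,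
      add_mul]
    congr 2
    refine if_congr ?_ rfl rfl
    constructor
    · intro h; exact Fin.ext h
    · intro h; rw [h]
  rw [Finset.sum_congr rfl (fun k _ => hT k), Finset.sum_add_distrib]
  simp only [ite_mul, one_mul, zero_mul]
  rw [Finset.sum_ite_eq' Finset.univ ℓ, Finset.sum_ite_eq' Finset.univ (⟨0, hn⟩ : Fin n)]
  rw [if_pos (Finset.mem_univ _), if_pos (Finset.mem_univ _)]
  rw [hSB ℓ, hSB ⟨0, hn⟩]
  show (2:ℤ) * (matA n ℓ m) = _
  simp only [pow_zero, one_mul]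
  rw [show (od (v ^ ℓ.1 * u ^ (2*n - ℓ.1))).coeff m.1 + (od (u ^ (2*n - 0))).coeff m.1
      = (od (u ^ (2*n) + v ^ ℓ.1 * u ^ (2*n - ℓ.1))).coeff m.1 from by
    rw [map_add, Polynomial.coeff_add, Nat.sub_zero]; ring]
  exact entry2A n ℓ.1 m.1 ℓ.2

-- (I2)
lemma I2 (n : ℕ) : matS n = matD2 n * matU2 n := by
  ext ℓ j
  have key : v ^ ℓ.1 * u ^ (n - 1 - ℓ.1)
      = ∑ i ∈ Finset.range n, Polynomial.C ((ℓ.1.choose i : ℤ) * (-2)^i) * ((X:ℤ[X]) ^ i * u ^ (n - 1 - i)) := by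
    have hv : v = (Polynomial.C (-2) * X) + u := by
      rw [show Polynomial.C (-2:ℤ) = ((-2:ℤ) : ℤ[X]) from Polynomial.C_eq_intCast _]
      unfold u v
      push_cast
      ring
    rw [hv, add_pow, Finset.sum_mul]
    rw [Finset.sum_subset (Finset.range_subset_range.mpr (show ℓ.1 + 1 ≤ n from ℓ.2)) ?_]
    · refine Finset.sum_congr rfl fun i hi => ?_
      rw [Finset.mem_range] at hi
      by_cases hil : i ≤ ℓ.1
      · have hexp : u ^ (ℓ.1 - i) * u ^ (n - 1 - ℓ.1) = u ^ (n - 1 - i) := by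
          rw [← pow_add]
          congr 1
          have := ℓ.2
          omega
        rw [mul_pow, ← map_pow, map_mul, Polynomial.C_eq_natCast, ← hexp]
        ring
      · rw [Nat.choose_eq_zero_of_lt (by omega)]
        simp
    · intro i _ hi
      rw [Finset.mem_range, not_lt] at hi
      rw [Nat.choose_eq_zero_of_lt (by omega)]
      simp
  have hRHS : (matD2 n * matU2 n) ℓ j = ∑ i : Fin n,
      ((ℓ.1.choose i.1 : ℤ) * (-2)^i.1) * ((X:ℤ[X]) ^ i.1 * u ^ (n - 1 - i.1)).coeff j.1 := by
    rw [Matrix.mul_apply]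
    rfl
  have hLHS : matS n ℓ j = (v ^ ℓ.1 * u ^ (n - 1 - ℓ.1)).coeff j.1 := rfl
  rw [hRHS, hLHS, key, Polynomial.finset_sum_coeff,
    ← Fin.sum_univ_eq_sum_range (fun i =>
      (Polynomial.C ((ℓ.1.choose i : ℤ) * (-2)^i) * ((X:ℤ[X]) ^ i * u ^ (n - 1 - i))).coeff j.1) n]
  exact Finset.sum_congr rfl fun i _ => Polynomial.coeff_C_mul _

-- (I3)
lemma I3 (n : ℕ) (hn : 1 ≤ n) : matW n * matB n = matV n := by
  ext j m
  rw [Matrix.mul_apply]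
  have hterm : ∀ k : Fin n, matW n j k * matB n k m
      = ((X:ℤ[X]) ^ j.1 * v ^ (n - 1 - j.1)).coeff k.1 * (od ((X:ℤ[X]) ^ k.1 * u ^ (n+1))).coeff m.1 :=
    fun k => rfl
  rw [Finset.sum_congr rfl (fun k _ => hterm k), Fin.sum_univ_eq_sum_range
    (fun k => ((X:ℤ[X]) ^ j.1 * v ^ (n - 1 - j.1)).coeff k * (od ((X:ℤ[X]) ^ k * u ^ (n+1))).coeff m.1)]
  rw [star n _ ?_ m.1]
  · have hj := j.2
    have hpoly : (X:ℤ[X]) ^ j.1 * v ^ (n - 1 - j.1) * u ^ (n+1)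
        = Polynomial.expand ℤ 2 (v ^ (n - 1 - j.1)) * ((X:ℤ[X]) ^ j.1 * u ^ (j.1+2)) := by
      rw [map_pow, show Polynomial.expand ℤ 2 v = v * u from by
        rw [show v = 1 - X from rfl, map_sub, map_one, Polynomial.expand_X,
          show u = 1 + X from rfl]
        ring]
      rw [mul_pow, show u ^ (n+1) = u ^ (n - 1 - j.1) * u ^ (j.1 + 2) from by
        rw [← pow_add]
        congr 1
        omega]
      ring
    rw [hpoly, od_expand_mul]
    rfl
  · have h1 := Polynomial.natDegree_mul_le (p := (X:ℤ[X]) ^ j.1) (q := v ^ (n - 1 - j.1))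
    have h2 := natDegree_v_pow_le (n - 1 - j.1)
    have h3 : ((X:ℤ[X]) ^ j.1).natDegree = j.1 := Polynomial.natDegree_X_pow _
    have hj := j.2
    omega

-- (I4) : entries of matV * matG (where matG = matU2)
set_option maxHeartbeats 2000000 in
lemma VG_apply (n : ℕ) (hn : 1 ≤ n) (j i : Fin n) :
    (matV n * matU2 n) j i = (theta j.1 (q j.1)).coeff i.1 := by
  rw [Matrix.mul_apply]
  have hterm : ∀ k : Fin n, matV n j k * matU2 n k i
      = (v ^ (n - 1 - j.1) * q j.1).coeff k.1 * ((X:ℤ[X]) ^ k.1 * u ^ (n - 1 - k.1)).coeff i.1 :=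
    fun k => rfl
  rw [Finset.sum_congr rfl (fun k _ => hterm k), Fin.sum_univ_eq_sum_range
    (fun k => (v ^ (n - 1 - j.1) * q j.1).coeff k * ((X:ℤ[X]) ^ k * u ^ (n - 1 - k)).coeff i.1)]
  have hj := j.2
  have h1 : theta (n-1) (v ^ (n - 1 - j.1) * q j.1)
      = theta j.1 (q j.1) := by
    have h0 := theta_v_mul (n - 1 - j.1) j.1 (q j.1) (q_natDegree_le j.1)
    rwa [show n - 1 - j.1 + j.1 = n - 1 from by omega] at h0
  rw [← h1, theta_coeff, show n - 1 + 1 = n from by omega]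
lemma det_matT (n : ℕ) (hn : 1 ≤ n) : (matT n).det = 2 := by
  rw [Matrix.det_of_lowerTriangular (matT n) ?_]
  · have hdiag : ∀ i : Fin n, matT n i i = if i = (⟨0, hn⟩ : Fin n) then 2 else 1 := by
      intro i
      show (if (i : Fin n) = i then (1:ℤ) else 0) + (if i.1 = 0 then 1 else 0) = _
      rw [if_pos rfl]
      by_cases h : i = (⟨0, hn⟩ : Fin n)
      · rw [if_pos (by rw [h]), if_pos h]
        norm_num
      · rw [if_neg (fun hh => h (Fin.ext hh)), if_neg h]
        norm_num
    rw [Finset.prod_congr rfl (fun i _ => hdiag i),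
      Finset.prod_ite_eq' Finset.univ (⟨0, hn⟩ : Fin n) (fun _ => (2:ℤ))]
    simp
  · intro i j hij
    have hij' : i < j := hij
    show (if j = i then (1:ℤ) else 0) + (if j.1 = 0 then 1 else 0) = 0
    rw [if_neg (fun h => absurd (h ▸ hij') (lt_irrefl _)),
      if_neg (by have := hij'; omega : ¬ j.1 = 0)]
    norm_num

lemma det_matD2 (n : ℕ) : (matD2 n).det = (-2:ℤ) ^ (∑ i ∈ Finset.range n, i) := by
  rw [Matrix.det_of_lowerTriangular (matD2 n) ?_]
  · have hdiag : ∀ i : Fin n, matD2 n i i = (-2:ℤ) ^ i.1 := by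
      intro i
      show (i.1.choose i.1 : ℤ) * (-2)^i.1 = _
      rw [Nat.choose_self]
      norm_num
    rw [Finset.prod_congr rfl (fun i _ => hdiag i), Finset.prod_pow_eq_pow_sum,
      ← Fin.sum_univ_eq_sum_range (fun i => i) n]
  · intro i j hij
    have hij' : i < j := hij
    show (i.1.choose j.1 : ℤ) * (-2)^j.1 = 0
    rw [Nat.choose_eq_zero_of_lt hij']
    norm_num

lemma det_coeffMat (n : ℕ) (f : ℕ → ℤ[X]) (hf : ∀ a, (f a).coeff 0 = 1) :
    (coeffMat n f).det = 1 := by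
  rw [Matrix.det_of_upperTriangular ?_]
  · have hdiag : ∀ i : Fin n, coeffMat n f i i = 1 := by
      intro i
      show ((X:ℤ[X]) ^ i.1 * f i.1).coeff i.1 = 1
      rw [mul_comm, Polynomial.coeff_mul_X_pow', if_pos (le_refl _), Nat.sub_self, hf]
    rw [Finset.prod_congr rfl (fun i _ => hdiag i)]
    exact Finset.prod_const_one
  · intro i j hij
    have hji : (j:ℕ) < i := hij
    show ((X:ℤ[X]) ^ i.1 * f i.1).coeff j.1 = 0
    rw [mul_comm, Polynomial.coeff_mul_X_pow', if_neg (by omega)]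

lemma det_VG (n : ℕ) (hn : 1 ≤ n) :
    ((matV n) * (matU2 n)).det = (2:ℤ) ^ (n + ∑ i ∈ Finset.range n, i) := by
  rw [Matrix.det_of_lowerTriangular _ ?_]
  · have hdiag : ∀ j : Fin n, (matV n * matU2 n) j j = (2:ℤ) ^ (j.1 + 1) := by
      intro j
      rw [VG_apply n hn, theta_coeff_self j.1 (q j.1) (by have := q_natDegree_le j.1; omega),
        q_eval_one]
    rw [Finset.prod_congr rfl (fun j _ => hdiag j), Finset.prod_pow_eq_pow_sum]
    congr 1
    rw [Fin.sum_univ_eq_sum_range (fun i => i + 1) n, Finset.sum_add_distrib,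
      Finset.sum_const, Finset.card_range]
    simp [add_comm]
  · intro j i hij
    have hij' : j < i := hij
    rw [VG_apply n hn]
    exact theta_coeff_eq_zero_of_lt j.1 (q j.1) i.1 hij'

end DetAEvenAux

theorem det_A_even (n : ℕ) (hn : 1 ≤ n) :
    Matrix.det (fun ℓ m : Fin n =>
      ((∑ k ∈ Finset.range (m.1 + 1),
        (ℓ.1).choose (2 * k) * (2 * n - ℓ.1).choose (2 * (m.1 - k) + 1) : ℕ) : ℤ)) =
    (-1) ^ (n * (n - 1) / 2) * 2 ^ (n * (n - 1) + 1) := by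
  open DetAEvenAux in
  show (matA n).det = _
  set c := ∑ i ∈ Finset.range n, i with hc
  have hc2 : c * 2 = n * (n - 1) := Finset.sum_range_id_mul_two n
  have hW : (DetAEvenAux.matW n).det = 1 := by
    unfold DetAEvenAux.matW
    exact det_coeffMat n _ (fun a => by rw [coeff_v_pow]; norm_num)
  have hU2 : (DetAEvenAux.matU2 n).det = 1 := by
    unfold DetAEvenAux.matU2
    exact det_coeffMat n _ (fun a => by rw [coeff_u_pow]; norm_num)
  have hBdet : (DetAEvenAux.matB n).det = (2:ℤ) ^ (n + c) := by
    have h := det_VG n hn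
    rw [← I3 n hn, Matrix.det_mul, Matrix.det_mul, hW, hU2] at h
    simpa using h
  have hSdet : (DetAEvenAux.matS n).det = (-2:ℤ) ^ c := by
    rw [I2 n, Matrix.det_mul, det_matD2 n, hU2, mul_one]
  have key : (2:ℤ)^n * (matA n).det = (2:ℤ)^n * ((-1)^c * 2^(2*c+1)) := by
    have e1 : ((2:ℤ) • matA n).det = (2:ℤ)^n * (matA n).det := by
      rw [Matrix.det_smul, Fintype.card_fin]
    rw [← e1, I1 n hn, Matrix.det_mul, Matrix.det_mul, det_matT n hn, hSdet, hBdet,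
      show ((-2):ℤ) = -1 * 2 from by norm_num, mul_pow]
    ring
  have := mul_left_cancel₀ (pow_ne_zero n (two_ne_zero (α := ℤ))) key
  rw [this, show n * (n - 1) / 2 = c from by omega, show n * (n - 1) + 1 = 2*c+1 from by omega]
end

section
/- For every natural number n, the determinant of the (n+1)×(n+1) matrix whose (ℓ,m)-entry (for ℓ,m ∈ {0,...,n}) is ∑_{k=0}^{m} C(ℓ,2k)·C(2n+1-ℓ, 2(m-k)+1) equals (-1)^{n(n+1)/2} · 2^{n²}. -/
open Polynomial Finset

namespace DetAOdd

lemma psum {M : Type*} [AddCommMonoid M] (f : ℕ → M) (d : ℕ) :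
    ∑ i ∈ range (2 * d), f i = ∑ k ∈ range d, f (2 * k) + ∑ k ∈ range d, f (2 * k + 1) := by
  induction d with
  | zero => simp
  | succ d ih =>
    have h : 2 * (d + 1) = (2 * d) + 1 + 1 := by ring
    rw [h, sum_range_succ, sum_range_succ, ih, sum_range_succ, sum_range_succ]
    abel

lemma one_sub_X_pow (j : ℕ) : (1 - X : ℤ[X]) ^ j
    = ∑ i ∈ range (j + 1), C ((-1 : ℤ) ^ i * (j.choose i : ℤ)) * X ^ i := by
  have h := add_pow (-X : ℤ[X]) 1 j
  simp only [one_pow, mul_one] at h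
  rw [show (1 - X : ℤ[X]) = -X + 1 by ring, h]
  refine Finset.sum_congr rfl fun i _ => ?_
  rw [neg_pow]
  simp only [map_mul, map_pow, map_neg, map_one, Polynomial.C_eq_natCast]
  ring

lemma coeff_one_sub_X_pow (j m : ℕ) :
    ((1 - X : ℤ[X]) ^ j).coeff m = (-1) ^ m * (j.choose m : ℤ) := by
  rw [one_sub_X_pow, finset_sum_coeff]
  simp only [coeff_C_mul, coeff_X_pow, mul_ite, mul_one, mul_zero]
  rw [Finset.sum_ite_eq]
  by_cases hm : m ∈ range (j + 1)
  · simp [hm]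
  · rw [if_neg hm]
    rw [mem_range] at hm
    rw [Nat.choose_eq_zero_of_lt (by omega)]
    simp

end DetAOdd

namespace DetAOdd

lemma keyA (n ℓ m : ℕ) (hℓ : ℓ ≤ 2 * n + 1) :
    ((1 - X : ℤ[X]) ^ ℓ * (1 + X) ^ (2 * n + 1 - ℓ)).coeff (2 * m + 1)
      + ((2 * n + 1).choose (2 * m + 1) : ℤ)
    = 2 * ∑ k ∈ range (m + 1),
        ((ℓ.choose (2 * k) * (2 * n + 1 - ℓ).choose (2 * (m - k) + 1) : ℕ) : ℤ) := by
  have hvand : ((2 * n + 1).choose (2 * m + 1) : ℤ)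
      = ∑ i ∈ range (2 * m + 1 + 1), (ℓ.choose i : ℤ) * ((2 * n + 1 - ℓ).choose (2 * m + 1 - i) : ℤ) := by
    have h := Nat.add_choose_eq ℓ (2 * n + 1 - ℓ) (2 * m + 1)
    rw [Nat.add_sub_cancel' hℓ] at h
    rw [h]
    rw [Finset.Nat.sum_antidiagonal_eq_sum_range_succ_mk]
    push_cast
    rfl
  have hcoeff : ((1 - X : ℤ[X]) ^ ℓ * (1 + X) ^ (2 * n + 1 - ℓ)).coeff (2 * m + 1)
      = ∑ i ∈ range (2 * m + 1 + 1),
          (-1 : ℤ) ^ i * (ℓ.choose i : ℤ) * ((2 * n + 1 - ℓ).choose (2 * m + 1 - i) : ℤ) := by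
    rw [coeff_mul, Finset.Nat.sum_antidiagonal_eq_sum_range_succ_mk]
    refine Finset.sum_congr rfl fun i _ => ?_
    rw [coeff_one_sub_X_pow, coeff_one_add_X_pow]
  rw [hcoeff, hvand, ← Finset.sum_add_distrib]
  have hsplit : ∑ i ∈ range (2 * m + 1 + 1),
      ((-1 : ℤ) ^ i * (ℓ.choose i : ℤ) * ((2 * n + 1 - ℓ).choose (2 * m + 1 - i) : ℤ)
        + (ℓ.choose i : ℤ) * ((2 * n + 1 - ℓ).choose (2 * m + 1 - i) : ℤ))
      = ∑ k ∈ range (m + 1),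
          (2 : ℤ) * (ℓ.choose (2 * k) : ℤ) * ((2 * n + 1 - ℓ).choose (2 * m + 1 - 2 * k) : ℤ) := by
    have h2 : 2 * m + 1 + 1 = 2 * (m + 1) := by ring
    rw [h2, psum]
    have hodd : ∑ k ∈ range (m + 1),
        ((-1 : ℤ) ^ (2 * k + 1) * (ℓ.choose (2 * k + 1) : ℤ) * ((2 * n + 1 - ℓ).choose (2 * m + 1 - (2 * k + 1)) : ℤ)
          + (ℓ.choose (2 * k + 1) : ℤ) * ((2 * n + 1 - ℓ).choose (2 * m + 1 - (2 * k + 1)) : ℤ)) = 0 := by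
      refine Finset.sum_eq_zero fun k _ => ?_
      rw [pow_succ, pow_mul]
      ring_nf
    rw [hodd, add_zero]
    refine Finset.sum_congr rfl fun k _ => ?_
    rw [pow_mul]
    ring_nf
  rw [hsplit, Finset.mul_sum]
  refine Finset.sum_congr rfl fun k hk => ?_
  have hk' : k ≤ m := by have := mem_range.1 hk; omega
  have : 2 * m + 1 - 2 * k = 2 * (m - k) + 1 := by omega
  rw [this]
  push_cast
  ring

end DetAOdd

namespace DetAOdd

noncomputable def S (d : ℕ) : ℤ[X] :=
  ∑ m ∈ range (d + 1), C (((2 * d + 1).choose (2 * m + 1) : ℤ)) * X ^ m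

def c (d i : ℕ) : ℤ :=
  (-1) ^ i * ∑ m ∈ range (d + 1), (((2 * d + 1).choose (2 * m + 1) * m.choose i : ℕ) : ℤ)

lemma inner_sum (d m : ℕ) (hm : m ≤ d) :
    ∑ i ∈ range (d + 1), C ((-1 : ℤ) ^ i * (m.choose i : ℤ)) * (1 - X : ℤ[X]) ^ i
      = X ^ m := by
  rw [← Finset.sum_subset (Finset.range_subset_range.2 (by omega : m + 1 ≤ d + 1))
    (fun i _ hi => by
      rw [Nat.choose_eq_zero_of_lt (by simpa using hi : m < i)]
      simp)]
  have h := add_pow (-(1 - X) : ℤ[X]) 1 m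
  simp only [one_pow, mul_one] at h
  rw [show (X : ℤ[X]) ^ m = ((-(1 - X)) + 1) ^ m by ring_nf, h]
  refine Finset.sum_congr rfl fun i _ => ?_
  rw [neg_pow ((1 : ℤ[X]) - X) i]
  simp only [map_mul, map_pow, map_neg, map_one, Polynomial.C_eq_natCast]
  ring

lemma S_expand (d : ℕ) :
    S d = ∑ i ∈ range (d + 1), C (c d i) * (1 - X : ℤ[X]) ^ i := by
  have hterm : ∀ i, C (c d i) * (1 - X : ℤ[X]) ^ i
      = ∑ m ∈ range (d + 1), C (((2 * d + 1).choose (2 * m + 1) : ℤ))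
          * (C ((-1 : ℤ) ^ i * (m.choose i : ℤ)) * (1 - X : ℤ[X]) ^ i) := by
    intro i
    rw [c, Finset.mul_sum, map_sum, Finset.sum_mul]
    refine Finset.sum_congr rfl fun m _ => ?_
    push_cast
    simp only [map_mul, map_pow, map_neg, map_one, Polynomial.C_eq_natCast]
    ring
  calc S d = ∑ m ∈ range (d + 1), C (((2 * d + 1).choose (2 * m + 1) : ℤ)) * X ^ m := rfl
    _ = ∑ m ∈ range (d + 1), C (((2 * d + 1).choose (2 * m + 1) : ℤ))
          * ∑ i ∈ range (d + 1), C ((-1 : ℤ) ^ i * (m.choose i : ℤ)) * (1 - X : ℤ[X]) ^ i := by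
        refine Finset.sum_congr rfl fun m hm => ?_
        rw [inner_sum d m (by have := mem_range.1 hm; omega)]
    _ = ∑ i ∈ range (d + 1), C (c d i) * (1 - X : ℤ[X]) ^ i := by
        simp_rw [Finset.mul_sum]
        rw [Finset.sum_comm]
        exact Finset.sum_congr rfl fun i _ => (hterm i).symm

end DetAOdd

namespace DetAOdd

noncomputable def Ey (d : ℕ) : ℤ[X] :=
  ∑ k ∈ range (d + 1), C (((2 * d + 1).choose (2 * k) : ℤ)) * X ^ k

lemma one_add_X_pow_split (d : ℕ) :
    (1 + X : ℤ[X]) ^ (2 * d + 1)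
      = expand ℤ 2 (Ey d) + X * expand ℤ 2 (S d) := by
  have h := add_pow (X : ℤ[X]) 1 (2 * d + 1)
  simp only [one_pow, mul_one] at h
  rw [show (1 + X : ℤ[X]) = X + 1 by ring, h,
    show 2 * d + 1 + 1 = 2 * (d + 1) by ring, psum]
  rw [Ey, S, map_sum, map_sum, Finset.mul_sum]
  congr 1
  · refine Finset.sum_congr rfl fun k _ => ?_
    rw [map_mul, map_pow, expand_X, expand_C, ← pow_mul, Polynomial.C_eq_natCast]
    ring
  · refine Finset.sum_congr rfl fun k _ => ?_
    rw [map_mul, map_pow, expand_X, expand_C, ← pow_mul, Polynomial.C_eq_natCast]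
    ring

lemma keyM (n ℓ m : ℕ) (hℓ : ℓ ≤ n) :
    ((1 - X : ℤ[X]) ^ ℓ * (1 + X) ^ (2 * n + 1 - ℓ)).coeff (2 * m + 1)
      = ((1 - X : ℤ[X]) ^ ℓ * S (n - ℓ)).coeff m := by
  have hexp : (1 - X : ℤ[X]) ^ ℓ * (1 + X) ^ (2 * n + 1 - ℓ)
      = expand ℤ 2 ((1 - X) ^ ℓ * Ey (n - ℓ))
        + X * expand ℤ 2 ((1 - X) ^ ℓ * S (n - ℓ)) := by
    have h1 : 2 * n + 1 - ℓ = ℓ + (2 * (n - ℓ) + 1) := by omega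
    rw [h1, pow_add, show (1 - X : ℤ[X]) ^ ℓ * ((1 + X) ^ ℓ * (1 + X) ^ (2 * (n - ℓ) + 1))
        = ((1 - X) * (1 + X)) ^ ℓ * (1 + X) ^ (2 * (n - ℓ) + 1) by rw [mul_pow]; ring]
    rw [one_add_X_pow_split (n - ℓ)]
    have h2 : ((1 - X) * (1 + X) : ℤ[X]) ^ ℓ = expand ℤ 2 ((1 - X) ^ ℓ) := by
      rw [map_pow, map_sub, map_one, expand_X]
      congr 1
      ring
    rw [h2, map_mul, map_mul]
    ring
  rw [hexp, coeff_add, coeff_expand (by norm_num : 0 < 2)]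
  rw [if_neg (by omega : ¬ 2 ∣ 2 * m + 1), zero_add, coeff_X_mul,
    coeff_expand (by norm_num : 0 < 2), if_pos ⟨m, rfl⟩]
  congr 1
  omega

end DetAOdd

namespace DetAOdd

lemma keyUW (n ℓ m : ℕ) (hℓ : ℓ ≤ n) :
    ((1 - X : ℤ[X]) ^ ℓ * S (n - ℓ)).coeff m
      = ∑ j ∈ range (n + 1),
          (if ℓ ≤ j then c (n - ℓ) (j - ℓ) else 0) * ((-1 : ℤ) ^ m * (j.choose m : ℤ)) := by
  have hlhs : ((1 - X : ℤ[X]) ^ ℓ * S (n - ℓ)).coeff m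
      = ∑ i ∈ range (n - ℓ + 1), c (n - ℓ) i * ((-1 : ℤ) ^ m * ((ℓ + i).choose m : ℤ)) := by
    rw [S_expand, Finset.mul_sum]
    have : ∀ i, (1 - X : ℤ[X]) ^ ℓ * (C (c (n - ℓ) i) * (1 - X) ^ i)
        = C (c (n - ℓ) i) * (1 - X) ^ (ℓ + i) := by
      intro i; rw [pow_add]; ring
    simp_rw [this]
    rw [finset_sum_coeff]
    refine Finset.sum_congr rfl fun i _ => ?_
    rw [coeff_C_mul, coeff_one_sub_X_pow]
  rw [hlhs]
  have h0 : ∑ j ∈ Finset.Ico 0 ℓ,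
      (if ℓ ≤ j then c (n - ℓ) (j - ℓ) else 0) * ((-1 : ℤ) ^ m * (j.choose m : ℤ)) = 0 := by
    refine Finset.sum_eq_zero fun j hj => ?_
    have hlt : ¬ ℓ ≤ j := by have := (Finset.mem_Ico.1 hj).2; omega
    simp [hlt]
  have hrhs : ∑ j ∈ range (n + 1),
      (if ℓ ≤ j then c (n - ℓ) (j - ℓ) else 0) * ((-1 : ℤ) ^ m * (j.choose m : ℤ))
      = ∑ k ∈ range (n + 1 - ℓ),
        (if ℓ ≤ ℓ + k then c (n - ℓ) (ℓ + k - ℓ) else 0) * ((-1 : ℤ) ^ m * ((ℓ + k).choose m : ℤ)) := by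
    conv_lhs => rw [Finset.range_eq_Ico]
    rw [← Finset.sum_Ico_consecutive _ (Nat.zero_le ℓ) (by omega : ℓ ≤ n + 1), h0, zero_add,
      Finset.sum_Ico_eq_sum_range]
  rw [hrhs, show n + 1 - ℓ = n - ℓ + 1 by omega]
  refine Finset.sum_congr rfl fun i _ => ?_
  rw [if_pos (Nat.le_add_right ℓ i)]
  congr 2
  omega

end DetAOdd

namespace DetAOdd

lemma c_zero (d : ℕ) : c d 0 = 4 ^ d := by
  have h1 : ∑ i ∈ range (2 * (d + 1)), ((2 * d + 1).choose i : ℤ) = 2 ^ (2 * d + 1) := by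
    have := Nat.sum_range_choose (2 * d + 1)
    have h : 2 * d + 1 + 1 = 2 * (d + 1) := by ring
    rw [h] at this
    exact_mod_cast congrArg (Nat.cast : ℕ → ℤ) this
  have h2 : ∑ i ∈ range (2 * (d + 1)), (-1 : ℤ) ^ i * ((2 * d + 1).choose i : ℤ) = 0 := by
    have := Int.alternating_sum_range_choose (n := 2 * d + 1)
    rw [if_neg (by omega : ¬ 2 * d + 1 = 0)] at this
    rw [show 2 * (d + 1) = 2 * d + 1 + 1 by ring]
    exact this
  rw [psum] at h1 h2
  have h2' : ∑ k ∈ range (d + 1), ((2 * d + 1).choose (2 * k) : ℤ)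
      - ∑ k ∈ range (d + 1), ((2 * d + 1).choose (2 * k + 1) : ℤ) = 0 := by
    rw [← h2]
    rw [sub_eq_add_neg, ← Finset.sum_neg_distrib]
    congr 1
    · refine Finset.sum_congr rfl fun k _ => ?_
      rw [pow_mul]
      norm_num
    · refine Finset.sum_congr rfl fun k _ => ?_
      rw [pow_succ, pow_mul]
      norm_num
  have hso : ∑ k ∈ range (d + 1), ((2 * d + 1).choose (2 * k + 1) : ℤ) = 4 ^ d := by
    have h4 : (2 : ℤ) ^ (2 * d + 1) = 2 * 4 ^ d := by
      rw [pow_succ, pow_mul]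
      norm_num
      ring
    linarith [h1, h2']
  rw [c]
  push_cast
  simp only [Nat.choose_zero_right, Nat.cast_one, mul_one, pow_zero, one_mul]
  exact_mod_cast hso

end DetAOdd

namespace DetAOdd

def Amat (n : ℕ) : Matrix (Fin (n + 1)) (Fin (n + 1)) ℤ :=
  fun ℓ m => ((∑ k ∈ Finset.range (m.1 + 1),
      (ℓ.1).choose (2 * k) * (2 * n + 1 - ℓ.1).choose (2 * (m.1 - k) + 1) : ℕ) : ℤ)

noncomputable def Mm (n : ℕ) : Matrix (Fin (n + 1)) (Fin (n + 1)) ℤ :=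
  fun ℓ m => ((1 - X : ℤ[X]) ^ ℓ.1 * (1 + X) ^ (2 * n + 1 - ℓ.1)).coeff (2 * m.1 + 1)

def Umat (n : ℕ) : Matrix (Fin (n + 1)) (Fin (n + 1)) ℤ :=
  fun ℓ j => if ℓ.1 ≤ j.1 then c (n - ℓ.1) (j.1 - ℓ.1) else 0

def Wmat (n : ℕ) : Matrix (Fin (n + 1)) (Fin (n + 1)) ℤ :=
  fun j m => (-1 : ℤ) ^ m.1 * ((j.1).choose m.1 : ℤ)

def Lmat (n : ℕ) : Matrix (Fin (n + 1)) (Fin (n + 1)) ℤ :=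
  fun ℓ ℓ' => (if ℓ' = 0 then 1 else 0) + (if ℓ' = ℓ then (if ℓ = 0 then (0 : ℤ) else 1) else 0)

noncomputable def Dmat (n : ℕ) : Matrix (Fin (n + 1)) (Fin (n + 1)) ℤ :=
  Matrix.diagonal (fun ℓ : Fin (n + 1) => if ℓ = 0 then (1 : ℤ) else 2)

lemma hM0 (n : ℕ) (m : Fin (n + 1)) :
    Mm n 0 m = ((2 * n + 1).choose (2 * m.1 + 1) : ℤ) := by
  show ((1 - X : ℤ[X]) ^ (0 : Fin (n+1)).1 * (1 + X) ^ (2 * n + 1 - (0 : Fin (n+1)).1)).coeff _ = _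
  rw [Fin.val_zero, pow_zero, one_mul, Nat.sub_zero, coeff_one_add_X_pow]

lemma h2A (n : ℕ) (ℓ m : Fin (n + 1)) :
    2 * Amat n ℓ m = Mm n 0 m + Mm n ℓ m := by
  have h := keyA n ℓ.1 m.1 (by omega : ℓ.1 ≤ 2 * n + 1)
  rw [hM0]
  have : (2 : ℤ) * Amat n ℓ m = 2 * ∑ k ∈ range (m.1 + 1),
      (((ℓ.1).choose (2 * k) * (2 * n + 1 - ℓ.1).choose (2 * (m.1 - k) + 1) : ℕ) : ℤ) := by
    rw [Amat]
    push_cast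
    ring
  rw [this, ← h, Mm]
  ring

lemma hMUW (n : ℕ) : Mm n = Umat n * Wmat n := by
  ext ℓ m
  rw [Matrix.mul_apply]
  have h1 : Mm n ℓ m = ∑ j ∈ range (n + 1),
      (if ℓ.1 ≤ j then c (n - ℓ.1) (j - ℓ.1) else 0) * ((-1 : ℤ) ^ m.1 * (j.choose m.1 : ℤ)) := by
    rw [Mm]
    have hl : ℓ.1 ≤ n := by omega
    rw [keyM n ℓ.1 m.1 hl, keyUW n ℓ.1 m.1 hl]
  rw [h1, ← Fin.sum_univ_eq_sum_range (fun j =>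
      (if ℓ.1 ≤ j then c (n - ℓ.1) (j - ℓ.1) else 0) * ((-1 : ℤ) ^ m.1 * (j.choose m.1 : ℤ))) (n + 1)]
  rfl

lemma hDALM (n : ℕ) : Dmat n * Amat n = Lmat n * Mm n := by
  ext ℓ m
  rw [Dmat, Matrix.diagonal_mul, Matrix.mul_apply]
  have hR : ∑ ℓ' : Fin (n + 1), Lmat n ℓ ℓ' * Mm n ℓ' m
      = Mm n 0 m + (if ℓ = 0 then 0 else Mm n ℓ m) := by
    simp only [Lmat, add_mul, ite_mul, one_mul, zero_mul, Finset.sum_add_distrib,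
      Finset.sum_ite_eq', Finset.mem_univ, if_true]
  rw [hR]
  by_cases hz : ℓ = 0
  · subst hz
    rw [if_pos rfl, if_pos rfl, one_mul, add_zero]
    have h := h2A n 0 m
    linarith
  · rw [if_neg hz, if_neg hz]
    exact h2A n ℓ m

end DetAOdd

namespace DetAOdd

lemma detW (n : ℕ) : (Wmat n).det = (-1 : ℤ) ^ (n * (n + 1) / 2) := by
  have htri : (Wmat n).BlockTriangular OrderDual.toDual := by
    intro i j h
    have hij : i < j := h
    simp only [Wmat]
    rw [Nat.choose_eq_zero_of_lt hij]
    simp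
  rw [Matrix.det_of_lowerTriangular _ htri]
  have hdiag : ∀ m : Fin (n + 1), Wmat n m m = (-1 : ℤ) ^ m.1 := by
    intro m
    rw [Wmat]
    simp [Nat.choose_self]
  calc ∏ m : Fin (n + 1), Wmat n m m = ∏ m : Fin (n + 1), (-1 : ℤ) ^ m.1 := by
        exact Finset.prod_congr rfl fun m _ => hdiag m
    _ = (-1 : ℤ) ^ (∑ m : Fin (n + 1), m.1) := by rw [Finset.prod_pow_eq_pow_sum]
    _ = (-1 : ℤ) ^ (n * (n + 1) / 2) := by
        congr 1
        rw [Fin.sum_univ_eq_sum_range (fun i => i) (n + 1), Finset.sum_range_id]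
        simp [Nat.mul_comm]

lemma detU (n : ℕ) : (Umat n).det = 2 ^ (n * (n + 1)) := by
  have htri : (Umat n).BlockTriangular id := by
    intro i j h
    have hij : (j : ℕ) < i := h
    simp only [Umat]
    rw [if_neg (by omega)]
  rw [Matrix.det_of_upperTriangular htri]
  have hdiag : ∀ ℓ : Fin (n + 1), Umat n ℓ ℓ = 4 ^ (n - ℓ.1) := by
    intro ℓ
    rw [Umat]
    simp only [le_refl, if_true, Nat.sub_self]
    exact c_zero (n - ℓ.1)
  calc ∏ ℓ : Fin (n + 1), Umat n ℓ ℓ = ∏ ℓ : Fin (n + 1), (4 : ℤ) ^ (n - ℓ.1) :=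
        Finset.prod_congr rfl fun ℓ _ => hdiag ℓ
    _ = (4 : ℤ) ^ (∑ ℓ : Fin (n + 1), (n - ℓ.1)) := by rw [Finset.prod_pow_eq_pow_sum]
    _ = 2 ^ (n * (n + 1)) := by
        have hsum : ∑ ℓ : Fin (n + 1), (n - ℓ.1) = n * (n + 1) / 2 := by
          rw [Fin.sum_univ_eq_sum_range (fun i => n - i) (n + 1)]
          have := Finset.sum_range_reflect (fun j => j) (n + 1)
          simp only [Nat.add_sub_cancel] at this
          calc ∑ i ∈ range (n + 1), (n - i)
              = ∑ i ∈ range (n + 1), (n + 1 - 1 - i) := by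
                refine Finset.sum_congr rfl fun i _ => ?_; omega
            _ = ∑ i ∈ range (n + 1), i := Finset.sum_range_reflect (fun j => j) (n + 1)
            _ = n * (n + 1) / 2 := by rw [Finset.sum_range_id]; simp [Nat.mul_comm]
        rw [hsum, show (4 : ℤ) = 2 ^ 2 by norm_num, ← pow_mul]
        congr 1
        have h2 : 2 ∣ n * (n + 1) := (Nat.even_mul_succ_self n).two_dvd
        omega

lemma detL (n : ℕ) : (Lmat n).det = 1 := by
  have htri : (Lmat n).BlockTriangular OrderDual.toDual := by
    intro i j h
    have hij : i < j := h
    simp only [Lmat]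
    rw [if_neg (by rintro rfl; exact absurd hij (by simp) : ¬ j = 0),
      if_neg (by rintro rfl; exact lt_irrefl _ hij : ¬ j = i)]
    ring
  rw [Matrix.det_of_lowerTriangular _ htri]
  refine Finset.prod_eq_one fun ℓ _ => ?_
  rw [Lmat]
  by_cases hz : ℓ = 0 <;> simp [hz]

lemma detD (n : ℕ) : (Dmat n).det = 2 ^ n := by
  rw [Dmat, Matrix.det_diagonal, Fin.prod_univ_succ]
  simp [Fin.succ_ne_zero]

end DetAOdd

theorem det_A_odd (n : ℕ) :
    Matrix.det (fun ℓ m : Fin (n + 1) =>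
      ((∑ k ∈ Finset.range (m.1 + 1),
        (ℓ.1).choose (2 * k) * (2 * n + 1 - ℓ.1).choose (2 * (m.1 - k) + 1) : ℕ) : ℤ)) =
    (-1) ^ (n * (n + 1) / 2) * 2 ^ (n ^ 2) := by
  have key : (DetAOdd.Dmat n).det * (DetAOdd.Amat n).det
      = (DetAOdd.Lmat n).det * ((DetAOdd.Umat n).det * (DetAOdd.Wmat n).det) := by
    rw [← Matrix.det_mul, ← Matrix.det_mul, ← Matrix.det_mul, DetAOdd.hDALM, DetAOdd.hMUW]
  rw [DetAOdd.detD, DetAOdd.detL, DetAOdd.detU, DetAOdd.detW, one_mul] at key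
  have hA : (DetAOdd.Amat n).det = (-1 : ℤ) ^ (n * (n + 1) / 2) * 2 ^ (n ^ 2) := by
    have h2 : (2 : ℤ) ^ n ≠ 0 := by positivity
    refine mul_left_cancel₀ h2 ?_
    rw [key, show n * (n + 1) = n + n ^ 2 by ring, pow_add]
    ring
  exact hA
end

section
/- For every natural number n, the determinant of the (n+1)×(n+1) matrix whose (ℓ,m)-entry (for ℓ,m ∈ {0,...,n}) is ∑_{k=0}^{m} C(ℓ,2k)·C(2n-ℓ, 2(m-k)) equals (-1)^{n(n+1)/2} · 2^{n(n-1)}. -/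
open Polynomial Finset

namespace DetBEven

/-- coefficient of (X+1)^a -/
lemma cpp (a k : ℕ) : (((X:ℤ[X]) + 1) ^ a).coeff k = a.choose k :=
  coeff_X_add_one_pow ℤ a k

/-- coefficient of X^j * (X+1)^a -/
lemma cXpp (j a k : ℕ) :
    ((X:ℤ[X]) ^ j * (X + 1) ^ a).coeff k =
      if j ≤ k then (a.choose (k - j) : ℤ) else 0 := by
  rw [mul_comm, coeff_mul_X_pow']
  split <;> simp [cpp]

/-- coefficient of (1 - X)^a -/
lemma cqq (a k : ℕ) : (((1:ℤ[X]) - X) ^ a).coeff k = (-1) ^ k * (a.choose k : ℤ) := by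
  have h : ((1:ℤ[X]) - X) ^ a = ∑ i ∈ range (a + 1), C ((-1:ℤ) ^ i * (a.choose i : ℤ)) * X ^ i := by
    have := add_pow (-X : ℤ[X]) 1 a
    simp only [one_pow, mul_one] at this
    have h2 : ((1:ℤ[X]) - X) = (-X) + 1 := by ring
    rw [h2, this]
    refine Finset.sum_congr rfl fun i _ => ?_
    rw [neg_pow]
    simp only [map_mul, map_pow, map_neg, map_one, C_eq_natCast]
    push_cast
    ring
  rw [h, finset_sum_coeff]
  simp only [coeff_C_mul, coeff_X_pow]
  by_cases hk : k ≤ a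
  · rw [Finset.sum_eq_single k]
    · simp
    · intro b _ hb
      simp [Ne.symm hb]
    · intro h; exact absurd (Finset.mem_range.2 (Nat.lt_succ_of_le hk)) h
  · rw [Nat.choose_eq_zero_of_lt (by omega), Finset.sum_eq_zero]
    · simp
    · intro b hb
      have : ¬ (k = b) := by simp at hb; omega
      simp [this]

/-- coefficient of X^j * (1-X)^a -/
lemma cXqq (j a k : ℕ) :
    ((X:ℤ[X]) ^ j * (1 - X) ^ a).coeff k =
      if j ≤ k then ((-1:ℤ)) ^ (k - j) * a.choose (k - j) else 0 := by
  rw [mul_comm, coeff_mul_X_pow']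
  split <;> simp [cqq]

/-- collapse a sum over range (2m+1) with vanishing odd terms -/
lemma sum_collapse (f : ℕ → ℤ) (m : ℕ) (h : ∀ i, i < m → f (2 * i + 1) = 0) :
    ∑ i ∈ range (2 * m + 1), f i = ∑ k ∈ range (m + 1), f (2 * k) := by
  induction m with
  | zero => simp
  | succ m ih =>
    have h1 : 2 * (m + 1) + 1 = (2 * m + 1) + 1 + 1 := by ring
    rw [h1, Finset.sum_range_succ, Finset.sum_range_succ,
      ih (fun i hi => h i (by omega)), Finset.sum_range_succ]
    have h2 : f (2 * m + 1) = 0 := h m (by omega)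
    have h3 : 2 * m + 1 + 1 = 2 * (m + 1) := by ring
    rw [h2, h3]
    simp [Finset.sum_range_succ]


/-- the coefficients used for the key row operation -/
def al (n j : ℕ) : ℤ := 1 - ∑ i ∈ range j, (-1:ℤ) ^ (n - i) * 2 ^ i * (n.choose i : ℤ)

lemma al_zero (n : ℕ) : al n 0 = 1 := by simp [al]

lemma al_succ (n j : ℕ) :
    al n (j + 1) = al n j - (-1:ℤ) ^ (n - j) * 2 ^ j * (n.choose j : ℤ) := by
  simp only [al, Finset.sum_range_succ]
  ring

lemma al_top (n : ℕ) : al n n = 2 ^ n := by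
  have h := add_pow (2 : ℤ) (-1) n
  simp only [show (2:ℤ) + (-1) = 1 by ring, one_pow] at h
  have hc : ∀ i, (2:ℤ) ^ i * (-1) ^ (n - i) * (n.choose i : ℤ)
      = (-1:ℤ) ^ (n - i) * 2 ^ i * (n.choose i : ℤ) := fun i => by ring
  simp only [hc] at h
  rw [Finset.sum_range_succ] at h
  simp only [Nat.sub_self, pow_zero, Nat.choose_self, Nat.cast_one, mul_one, one_mul] at h
  have h2 : ∑ i ∈ range n, (-1:ℤ) ^ (n - i) * 2 ^ i * (n.choose i : ℤ) = 1 - 2 ^ n := by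
    linarith
  simp [al, h2]

/-- key polynomial identity -/
lemma key_poly (n : ℕ) (y : ℤ[X]) :
    ∑ j ∈ range (n + 1), (C (al n j)) * y ^ j * (y + 1) ^ (2 * n - j) =
      (y + 1) ^ (2 * n + 1) - y * (y + 1) ^ n * (y - 1) ^ n := by
  set z : ℤ[X] := y + 1 with hz
  set S : ℤ[X] := ∑ j ∈ range (n + 1), (C (al n j)) * y ^ j * z ^ (2 * n - j) with hS
  have hS1 : S = S * z - S * y := by
    have h1 : z - y = 1 := by rw [hz]; ring
    have h2 : S * (z - y) = S * z - S * y := by ring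
    rw [← h2, h1, mul_one]
  have hSz : S * z = ∑ j ∈ range (n + 1), (C (al n j)) * y ^ j * z ^ (2 * n + 1 - j) := by
    rw [hS, Finset.sum_mul]
    refine Finset.sum_congr rfl fun j hj => ?_
    have hj' : j ≤ n := Nat.lt_succ_iff.mp (Finset.mem_range.mp hj)
    have he : 2 * n + 1 - j = (2 * n - j) + 1 := by omega
    rw [he, pow_succ]
    ring
  have hSy : S * y = ∑ j ∈ range (n + 1), (C (al n j)) * y ^ (j + 1) * z ^ (2 * n - j) := by
    rw [hS, Finset.sum_mul]
    refine Finset.sum_congr rfl fun j hj => ?_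
    rw [pow_succ]
    ring
  have hA : S * z = C (al n 0) * z ^ (2 * n + 1) +
      ∑ j ∈ range n, C (al n (j + 1)) * y ^ (j + 1) * z ^ (2 * n - j) := by
    rw [hSz, Finset.sum_range_succ']
    have he : ∀ j ∈ range n, C (al n (j + 1)) * y ^ (j + 1) * z ^ (2 * n + 1 - (j + 1))
        = C (al n (j + 1)) * y ^ (j + 1) * z ^ (2 * n - j) := by
      intro j _
      have he2 : 2 * n + 1 - (j + 1) = 2 * n - j := by omega
      rw [he2]
    rw [Finset.sum_congr rfl he]
    simp only [pow_zero, mul_one, Nat.sub_zero]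
    ring
  have hB : S * y = (∑ j ∈ range n, C (al n j) * y ^ (j + 1) * z ^ (2 * n - j)) +
      C (al n n) * y ^ (n + 1) * z ^ n := by
    rw [hSy, Finset.sum_range_succ]
    have h6 : 2 * n - n = n := by omega
    rw [h6]
  have hdiff : ∑ j ∈ range n, (C (al n (j + 1)) - C (al n j)) * y ^ (j + 1) * z ^ (2 * n - j) =
      -(y * z ^ n * (2 * y - z) ^ n) + C (al n n) * y ^ (n + 1) * z ^ n := by
    have hsub : ∀ j, C (al n (j + 1)) - C (al n j)
        = - (C ((-1:ℤ) ^ (n - j) * 2 ^ j * (n.choose j : ℤ))) := by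
      intro j
      rw [← C_sub, ← C_neg]
      congr 1
      rw [al_succ]
      ring
    have hexp : y * z ^ n * (2 * y - z) ^ n =
        ∑ j ∈ range (n + 1),
          C ((-1:ℤ) ^ (n - j) * 2 ^ j * (n.choose j : ℤ)) * y ^ (j + 1) * z ^ (2 * n - j) := by
      have h3 := add_pow (2 * y) (-z) n
      have h4 : 2 * y + (-z) = 2 * y - z := by ring
      rw [h4] at h3
      rw [h3, Finset.mul_sum]
      refine Finset.sum_congr rfl fun j hj => ?_
      have hj' : j ≤ n := Nat.lt_succ_iff.mp (Finset.mem_range.mp hj)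
      have h5 : 2 * n - j = (n - j) + n := by omega
      rw [h5, pow_add, neg_pow, mul_pow]
      simp only [map_mul, map_pow, map_neg, map_one, map_ofNat, C_eq_natCast]
      ring
    rw [Finset.sum_range_succ] at hexp
    have h6 : 2 * n - n = n := by omega
    rw [h6] at hexp
    have h7 : ∑ j ∈ range n,
        C ((-1:ℤ) ^ (n - j) * 2 ^ j * (n.choose j : ℤ)) * y ^ (j + 1) * z ^ (2 * n - j) =
        y * z ^ n * (2 * y - z) ^ n
          - C ((-1:ℤ) ^ (n - n) * 2 ^ n * (n.choose n : ℤ)) * y ^ (n + 1) * z ^ n := by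
      rw [hexp]; ring
    have h8 : ∑ j ∈ range n, (C (al n (j + 1)) - C (al n j)) * y ^ (j + 1) * z ^ (2 * n - j)
        = -(∑ j ∈ range n,
            C ((-1:ℤ) ^ (n - j) * 2 ^ j * (n.choose j : ℤ)) * y ^ (j + 1) * z ^ (2 * n - j)) := by
      rw [← Finset.sum_neg_distrib]
      refine Finset.sum_congr rfl fun j _ => ?_
      rw [hsub j]; ring
    rw [h8, h7, al_top]
    simp only [Nat.sub_self, pow_zero, Nat.choose_self, Nat.cast_one, one_mul, mul_one]
    push_cast
    ring
  have hAB : ∀ (P A B Q : ℤ[X]), P + A - (B + Q) = P + (A - B) - Q := by intros; ring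
  have hsubsum : (∑ j ∈ range n, C (al n (j + 1)) * y ^ (j + 1) * z ^ (2 * n - j))
      - (∑ j ∈ range n, C (al n j) * y ^ (j + 1) * z ^ (2 * n - j))
      = ∑ j ∈ range n, (C (al n (j + 1)) - C (al n j)) * y ^ (j + 1) * z ^ (2 * n - j) := by
    rw [← Finset.sum_sub_distrib]
    refine Finset.sum_congr rfl fun j _ => ?_
    ring
  have final : S = C (al n 0) * z ^ (2 * n + 1) - y * z ^ n * (2 * y - z) ^ n := by
    rw [hS1, hA, hB, hAB, hsubsum, hdiff]
    ring
  rw [final, al_zero]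
  have h9 : 2 * y - z = y - 1 := by rw [hz]; ring
  rw [h9]
  simp only [map_one, one_mul]

lemma neg_one_pow_even_sub {a b : ℕ} (h : b ≤ 2 * a) : ((-1:ℤ)) ^ (2 * a - b) = (-1) ^ b := by
  have h1 : ((-1:ℤ)) ^ (2 * a - b) * (-1) ^ b = 1 := by
    rw [← pow_add]
    have he : 2 * a - b + b = 2 * a := by omega
    rw [he, pow_mul]
    norm_num
  have h2 : ((-1:ℤ)) ^ b * (-1) ^ b = 1 := by
    rw [← pow_add, ← two_mul, pow_mul]
    norm_num
  have h3 : ((-1:ℤ)) ^ b ≠ 0 := pow_ne_zero b (by norm_num)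
  exact mul_right_cancel₀ h3 (h1.trans h2.symm)

/-- mirror lemma: even coefficients of X^j (1-X)^a vs X^j (X+1)^a -/
lemma mirror (j a m : ℕ) :
    ((X:ℤ[X]) ^ j * (1 - X) ^ a).coeff (2 * m) =
      (-1) ^ j * ((X:ℤ[X]) ^ j * (X + 1) ^ a).coeff (2 * m) := by
  rw [cXqq, cXpp]
  by_cases h : j ≤ 2 * m
  · simp only [h, if_true]
    rw [neg_one_pow_even_sub h]
  · simp [h]

/-- the full-range row combination identity -/
lemma hfull (n m : ℕ) :
    ∑ j ∈ range (n + 1), al n j * (((X:ℤ[X]) ^ j * (X + 1) ^ (2 * n - j)).coeff (2 * m))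
      = (((X:ℤ[X]) + 1) ^ (2 * n + 1)).coeff (2 * m) := by
  have key1 := key_poly n X
  have key2 := key_poly n (-X)
  have hterm : ∀ j a : ℕ, ((X:ℤ[X]) ^ j * (X + 1) ^ a).coeff (2 * m)
      = (-1:ℤ) ^ j * ((X:ℤ[X]) ^ j * (1 - X) ^ a).coeff (2 * m) := by
    intro j a
    rw [mirror]
    have h0 : ((-1:ℤ)) ^ j * (-1) ^ j = 1 := by
      rw [← pow_add, ← two_mul, pow_mul]; norm_num
    rw [← mul_assoc, h0, one_mul]
  have e1 : ∑ j ∈ range (n + 1), al n j * (((X:ℤ[X]) ^ j * (X + 1) ^ (2 * n - j)).coeff (2 * m))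
      = (((X:ℤ[X]) + 1) ^ (2 * n + 1) - X * (X + 1) ^ n * (X - 1) ^ n).coeff (2 * m) := by
    rw [← key1, finset_sum_coeff]
    refine Finset.sum_congr rfl fun j _ => ?_
    rw [mul_assoc, coeff_C_mul]
  have e2 : ∑ j ∈ range (n + 1), al n j * (((X:ℤ[X]) ^ j * (X + 1) ^ (2 * n - j)).coeff (2 * m))
      = ((-X + 1 : ℤ[X]) ^ (2 * n + 1) - (-X) * (-X + 1) ^ n * (-X - 1) ^ n).coeff (2 * m) := by
    rw [← key2, finset_sum_coeff]
    have ht : ∀ j : ℕ, C (al n j) * (-X : ℤ[X]) ^ j * (-X + 1) ^ (2 * n - j)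
        = C (al n j * (-1) ^ j) * ((X:ℤ[X]) ^ j * (1 - X) ^ (2 * n - j)) := by
      intro j
      rw [neg_pow, show ((-X:ℤ[X]) + 1) = 1 - X by ring]
      simp only [map_mul, map_pow, map_neg, map_one]
      ring
    refine Finset.sum_congr rfl fun j _ => ?_
    rw [ht j, coeff_C_mul, hterm j (2 * n - j)]
    ring
  have hpoly : ((X:ℤ[X]) + 1) ^ (2 * n + 1) - X * (X + 1) ^ n * (X - 1) ^ n
      + ((-X + 1 : ℤ[X]) ^ (2 * n + 1) - (-X) * (-X + 1) ^ n * (-X - 1) ^ n)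
      = ((X:ℤ[X]) + 1) ^ (2 * n + 1) + (1 - X) ^ (2 * n + 1) := by
    have h1 : ((X:ℤ[X]) - 1) ^ n = (-1) ^ n * (1 - X) ^ n := by
      rw [show ((X:ℤ[X]) - 1) = -(1 - X) by ring, neg_pow]
    have h2 : ((-X - 1 : ℤ[X])) ^ n = (-1) ^ n * (X + 1) ^ n := by
      rw [show ((-X - 1 : ℤ[X])) = -(X + 1) by ring, neg_pow]
    have h3 : (-X + 1 : ℤ[X]) = 1 - X := by ring
    rw [h1, h2, h3]
    ring
  have h5 : (((1:ℤ[X]) - X) ^ (2 * n + 1)).coeff (2 * m)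
      = (((X:ℤ[X]) + 1) ^ (2 * n + 1)).coeff (2 * m) := by
    rw [cqq, cpp]
    have : ((-1:ℤ)) ^ (2 * m) = 1 := by rw [pow_mul]; norm_num
    rw [this, one_mul]
  have e3 : (∑ j ∈ range (n + 1), al n j * (((X:ℤ[X]) ^ j * (X + 1) ^ (2 * n - j)).coeff (2 * m)))
      + (∑ j ∈ range (n + 1), al n j * (((X:ℤ[X]) ^ j * (X + 1) ^ (2 * n - j)).coeff (2 * m)))
      = (((X:ℤ[X]) + 1) ^ (2 * n + 1)).coeff (2 * m)
        + (((X:ℤ[X]) + 1) ^ (2 * n + 1)).coeff (2 * m) := by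
    nth_rewrite 1 [e1]
    nth_rewrite 1 [e2]
    rw [← coeff_add, hpoly, coeff_add, h5]
  linarith


/-- the entries of the original matrix, as integers -/
def Bent (n j m : ℕ) : ℤ := ∑ k ∈ range (m + 1), (j.choose (2 * k) : ℤ) * ((2 * n - j).choose (2 * (m - k)) : ℤ)

/-- twice an entry as sum of two polynomial coefficients -/
lemma twoB (n j m : ℕ) (hj : j ≤ 2 * n) :
    2 * Bent n j m = (((X:ℤ[X]) + 1) ^ (2 * n)).coeff (2 * m)
      + ((((X:ℤ[X]) + 1) ^ j * (1 - X) ^ (2 * n - j))).coeff (2 * m) := by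
  have hsplit : (((X:ℤ[X]) + 1) ^ (2 * n)) = ((X:ℤ[X]) + 1) ^ j * ((X:ℤ[X]) + 1) ^ (2 * n - j) := by
    rw [← pow_add]
    congr 1
    omega
  rw [hsplit, coeff_mul, coeff_mul, Finset.Nat.sum_antidiagonal_eq_sum_range_succ_mk,
    Finset.Nat.sum_antidiagonal_eq_sum_range_succ_mk, ← Finset.sum_add_distrib]
  have hterm : ∀ i : ℕ, (((X:ℤ[X]) + 1) ^ j).coeff i * (((X:ℤ[X]) + 1) ^ (2 * n - j)).coeff (2 * m - i)
      + (((X:ℤ[X]) + 1) ^ j).coeff i * (((1:ℤ[X]) - X) ^ (2 * n - j)).coeff (2 * m - i)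
      = (j.choose i : ℤ) * ((2 * n - j).choose (2 * m - i) : ℤ) * (1 + (-1) ^ (2 * m - i)) := by
    intro i
    rw [cpp, cpp, cqq]
    ring
  rw [Finset.sum_congr rfl (fun i _ => hterm i)]
  rw [sum_collapse _ m]
  · rw [Bent, Finset.mul_sum]
    refine Finset.sum_congr rfl fun k hk => ?_
    have hk' : k ≤ m := Nat.lt_succ_iff.mp (Finset.mem_range.mp hk)
    have h1 : 2 * m - 2 * k = 2 * (m - k) := by omega
    have h2 : ((-1:ℤ)) ^ (2 * (m - k)) = 1 := by
      rw [pow_mul]; norm_num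
    rw [h1, h2]
    ring
  · intro i hi
    have h1 : 2 * m - (2 * i + 1) = 2 * (m - i - 1) + 1 := by omega
    have h2 : ((-1:ℤ)) ^ (2 * m - (2 * i + 1)) = -1 := by
      rw [h1, pow_succ, pow_mul]; norm_num
    rw [h2]
    ring

/-- the alternating-sum row operation identity (stage 1), scalar form -/
lemma stage1 (n ℓ m : ℕ) (hl : ℓ ≤ n) :
    ∑ j ∈ range (ℓ + 1), (-1:ℤ) ^ (ℓ - j) * (ℓ.choose j : ℤ) * Bent n j m
      = (if ℓ = 0 then 1 else (-1:ℤ) ^ ℓ * 2 ^ (ℓ - 1))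
        * ((X:ℤ[X]) ^ ℓ * (X + 1) ^ (2 * n - ℓ)).coeff (2 * m) := by
  apply mul_left_cancel₀ (two_ne_zero (α := ℤ))
  have expand : (2:ℤ) * ∑ j ∈ range (ℓ + 1), (-1:ℤ) ^ (ℓ - j) * (ℓ.choose j : ℤ) * Bent n j m
      = (∑ j ∈ range (ℓ + 1), (-1:ℤ) ^ (ℓ - j) * (ℓ.choose j : ℤ))
          * (((X:ℤ[X]) + 1) ^ (2 * n)).coeff (2 * m)
        + ∑ j ∈ range (ℓ + 1), (-1:ℤ) ^ (ℓ - j) * (ℓ.choose j : ℤ)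
            * ((((X:ℤ[X]) + 1) ^ j * (1 - X) ^ (2 * n - j))).coeff (2 * m) := by
    rw [Finset.mul_sum, Finset.sum_mul, ← Finset.sum_add_distrib]
    refine Finset.sum_congr rfl fun j hj => ?_
    have hj' : j ≤ ℓ := Nat.lt_succ_iff.mp (Finset.mem_range.mp hj)
    have := twoB n j m (by omega)
    calc 2 * ((-1:ℤ) ^ (ℓ - j) * (ℓ.choose j : ℤ) * Bent n j m)
        = (-1:ℤ) ^ (ℓ - j) * (ℓ.choose j : ℤ) * (2 * Bent n j m) := by ring
      _ = _ := by rw [this]; ring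
  -- the polynomial row-combination
  have polyid : ∑ j ∈ range (ℓ + 1), C ((-1:ℤ) ^ (ℓ - j) * (ℓ.choose j : ℤ))
        * (((X:ℤ[X]) + 1) ^ j * (1 - X) ^ (2 * n - j))
      = C ((2:ℤ) ^ ℓ) * ((X:ℤ[X]) ^ ℓ * (1 - X) ^ (2 * n - ℓ)) := by
    have hsplit : ∀ j ≤ ℓ, ((1:ℤ[X]) - X) ^ (2 * n - j)
        = (1 - X) ^ (ℓ - j) * (1 - X) ^ (2 * n - ℓ) := by
      intro j hj
      rw [← pow_add]
      congr 1
      omega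
    have step : ∀ j ∈ range (ℓ + 1), C ((-1:ℤ) ^ (ℓ - j) * (ℓ.choose j : ℤ))
          * (((X:ℤ[X]) + 1) ^ j * (1 - X) ^ (2 * n - j))
        = (((X:ℤ[X]) + 1) ^ j * ((X:ℤ[X]) - 1) ^ (ℓ - j) * (ℓ.choose j : ℤ[X])) * (1 - X) ^ (2 * n - ℓ) := by
      intro j hj
      have hj' : j ≤ ℓ := Nat.lt_succ_iff.mp (Finset.mem_range.mp hj)
      rw [hsplit j hj']
      have h1 : ((X:ℤ[X]) - 1) ^ (ℓ - j) = (-1) ^ (ℓ - j) * (1 - X) ^ (ℓ - j) := by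
        rw [show ((X:ℤ[X]) - 1) = -(1 - X) by ring, neg_pow]
      rw [h1]
      simp only [map_mul, map_pow, map_neg, map_one, C_eq_natCast]
      ring
    rw [Finset.sum_congr rfl step, ← Finset.sum_mul]
    have := add_pow ((X:ℤ[X]) + 1) ((X:ℤ[X]) - 1) ℓ
    have h2 : ((X:ℤ[X]) + 1) + ((X:ℤ[X]) - 1) = 2 * X := by ring
    rw [h2] at this
    rw [← this, mul_pow]
    have h3 : ((2:ℤ[X])) ^ ℓ = C ((2:ℤ) ^ ℓ) := by
      simp [map_pow]
    rw [h3]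
    ring
  have sumco : ∑ j ∈ range (ℓ + 1), (-1:ℤ) ^ (ℓ - j) * (ℓ.choose j : ℤ)
      * ((((X:ℤ[X]) + 1) ^ j * (1 - X) ^ (2 * n - j))).coeff (2 * m)
      = (2:ℤ) ^ ℓ * (((X:ℤ[X]) ^ ℓ * (1 - X) ^ (2 * n - ℓ))).coeff (2 * m) := by
    have := congrArg (fun p => Polynomial.coeff p (2 * m)) polyid
    simp only [finset_sum_coeff, coeff_C_mul] at this
    exact this
  have alt : ∑ j ∈ range (ℓ + 1), (-1:ℤ) ^ (ℓ - j) * (ℓ.choose j : ℤ)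
      = if ℓ = 0 then 1 else 0 := by
    rw [← Finset.sum_range_reflect]
    have : ∀ j ∈ range (ℓ + 1), (-1:ℤ) ^ (ℓ - (ℓ + 1 - 1 - j)) * (ℓ.choose (ℓ + 1 - 1 - j) : ℤ)
        = (-1:ℤ) ^ j * (ℓ.choose j : ℤ) := by
      intro j hj
      have hj' : j ≤ ℓ := Nat.lt_succ_iff.mp (Finset.mem_range.mp hj)
      have e : ℓ + 1 - 1 - j = ℓ - j := by omega
      have e2 : ℓ - (ℓ - j) = j := by omega
      rw [e, Nat.choose_symm hj', e2]
    rw [Finset.sum_congr rfl this]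
    exact Int.alternating_sum_range_choose
  rw [expand, sumco, alt, mirror ℓ (2 * n - ℓ) m]
  by_cases h0 : ℓ = 0
  · subst h0
    simp only [if_true, pow_zero, one_mul, Nat.sub_zero]
    ring
  · simp only [h0, if_false, zero_mul, zero_add]
    have h4 : (2:ℤ) ^ ℓ = 2 * 2 ^ (ℓ - 1) := by
      obtain ⟨k, rfl⟩ : ∃ k, ℓ = k + 1 := ⟨ℓ - 1, by omega⟩
      simp [pow_succ]
      ring
    rw [h4]
    ring


/-- the matrix D -/
noncomputable def Dm (n : ℕ) : Matrix (Fin (n + 1)) (Fin (n + 1)) ℤ :=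
  Matrix.of fun ℓ m => ((X:ℤ[X]) ^ (ℓ.1) * (X + 1) ^ (2 * n - ℓ.1)).coeff (2 * m.1)

/-- first row-operation matrix: second differences -/
def T1 (n : ℕ) : Matrix (Fin (n + 2)) (Fin (n + 2)) ℤ :=
  Matrix.of fun ℓ j =>
    if ℓ.1 = j.1 then 1
    else if ℓ.1 = j.1 + 1 then (if j.1 = 0 then -1 else -2)
    else if ℓ.1 = j.1 + 2 then 1 else 0

/-- intermediate matrix -/
noncomputable def Fm (n : ℕ) : Matrix (Fin (n + 2)) (Fin (n + 2)) ℤ :=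
  Matrix.of fun ℓ m =>
    if ℓ.1 = 0 then (((X:ℤ[X]) + 1) ^ (2 * n + 2)).coeff (2 * m.1)
    else if ℓ.1 = 1 then -(((X:ℤ[X]) + 1) ^ (2 * n + 1)).coeff (2 * m.1)
    else ((X:ℤ[X]) ^ (ℓ.1 - 2) * (X + 1) ^ (2 * n - (ℓ.1 - 2))).coeff (2 * m.1)

/-- second row-operation matrix -/
def T2 (n : ℕ) : Matrix (Fin (n + 2)) (Fin (n + 2)) ℤ :=
  Matrix.of fun ℓ j =>
    if ℓ = j then 1
    else if ℓ.1 = 1 ∧ 2 ≤ j.1 then al n (j.1 - 2) else 0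

/-- final matrix -/
noncomputable def Em (n : ℕ) : Matrix (Fin (n + 2)) (Fin (n + 2)) ℤ :=
  Matrix.of fun ℓ m =>
    if ℓ.1 = 0 then (((X:ℤ[X]) + 1) ^ (2 * n + 2)).coeff (2 * m.1)
    else if ℓ.1 = 1 then -(2 ^ n * ((X:ℤ[X]) ^ n * (X + 1) ^ n).coeff (2 * m.1))
    else ((X:ℤ[X]) ^ (ℓ.1 - 2) * (X + 1) ^ (2 * n - (ℓ.1 - 2))).coeff (2 * m.1)

lemma hT1D (n : ℕ) : T1 n * Dm (n + 1) = Fm n := by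
  ext ℓ m
  rw [Matrix.mul_apply]
  by_cases h0 : ℓ.1 = 0
  · have hsum : ∀ j : Fin (n + 2), T1 n ℓ j * Dm (n + 1) j m
        = if j = (0 : Fin (n + 2)) then Dm (n + 1) 0 m else 0 := by
      intro j
      by_cases hj : j = (0 : Fin (n + 2))
      · subst hj
        simp [T1, h0, Dm]
      · have hj' : j.1 ≠ 0 := fun h => hj (Fin.ext h)
        have c1 : ¬(ℓ.1 = j.1) := by omega
        have c2 : ¬(ℓ.1 = j.1 + 1) := by omega
        have c3 : ¬(ℓ.1 = j.1 + 2) := by omega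
        simp [T1, c1, c2, c3, hj]
    rw [Finset.sum_congr rfl (fun j _ => hsum j), Finset.sum_ite_eq' Finset.univ]
    simp only [Finset.mem_univ, if_true]
    show ((X:ℤ[X]) ^ ((0:Fin (n+2)).1) * (X + 1) ^ (2 * (n+1) - (0:Fin (n+2)).1)).coeff (2 * m.1) = Fm n ℓ m
    simp only [Fin.val_zero, pow_zero, one_mul, Nat.sub_zero, Fm, Matrix.of_apply, h0, if_true]
    have e : 2 * (n + 1) = 2 * n + 2 := by omega
    rw [e]
  · by_cases h1 : ℓ.1 = 1
    · have hsum : ∀ j : Fin (n + 2), T1 n ℓ j * Dm (n + 1) j m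
          = (if j = (0 : Fin (n + 2)) then -(Dm (n + 1) 0 m) else 0)
            + (if j = (1 : Fin (n + 2)) then Dm (n + 1) 1 m else 0) := by
        intro j
        by_cases hj0 : j = (0 : Fin (n + 2))
        · subst hj0
          have c1 : ¬(ℓ.1 = (0:Fin (n+2)).1) := by simp only [Fin.val_zero]; omega
          simp [T1, h1, Dm]
        · by_cases hj1 : j = (1 : Fin (n + 2))
          · subst hj1
            have hv : (1 : Fin (n+2)).1 = 1 := rfl
            have c1 : ℓ.1 = (1:Fin (n+2)).1 := by rw [hv]; omega
            simp [T1, c1, hj0]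
          · have hj0' : j.1 ≠ 0 := fun h => hj0 (Fin.ext h)
            have hj1' : j.1 ≠ 1 := fun h => hj1 (Fin.ext h)
            have c1 : ¬(ℓ.1 = j.1) := by omega
            have c2 : ¬(ℓ.1 = j.1 + 1) := by omega
            have c3 : ¬(ℓ.1 = j.1 + 2) := by omega
            simp [T1, c1, c2, c3, hj0, hj1]
      rw [Finset.sum_congr rfl (fun j _ => hsum j), Finset.sum_add_distrib,
        Finset.sum_ite_eq' Finset.univ, Finset.sum_ite_eq' Finset.univ]
      simp only [Finset.mem_univ, if_true]
      show -(Dm (n+1) 0 m) + Dm (n+1) 1 m = Fm n ℓ m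
      have hFm : Fm n ℓ m = -(((X:ℤ[X]) + 1) ^ (2 * n + 1)).coeff (2 * m.1) := by
        simp [Fm, h1, -Fin.val_eq_zero_iff]
      have hD0 : Dm (n+1) 0 m = (((X:ℤ[X]) + 1) ^ ((2 * n + 1) + 1)).coeff (2 * m.1) := by
        simp [Dm, show 2 * (n + 1) - 0 = (2 * n + 1) + 1 from by omega]
      have hD1 : Dm (n+1) 1 m = ((X:ℤ[X]) * ((X:ℤ[X]) + 1) ^ (2 * n + 1)).coeff (2 * m.1) := by
        simp [Dm, show 2 * (n + 1) - 1 = 2 * n + 1 from by omega]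
      rw [hFm, hD0, hD1, ← coeff_neg (((X:ℤ[X]) + 1) ^ ((2 * n + 1) + 1)), ← coeff_add,
        ← coeff_neg (((X:ℤ[X]) + 1) ^ (2 * n + 1))]
      congr 1
      rw [pow_succ]
      ring
    · -- ℓ.1 ≥ 2
      have h2 : 2 ≤ ℓ.1 := by omega
      set a : ℕ := ℓ.1 - 2 with ha
      have hA : ℓ.1 = a + 2 := by omega
      have haN : a ≤ n - 1 ∨ a ≤ n := by right; have := ℓ.isLt; omega
      have han : a ≤ n := by have := ℓ.isLt; omega
      let jB : Fin (n + 2) := ⟨a + 1, by omega⟩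
      let jC : Fin (n + 2) := ⟨a, by omega⟩
      have hsum : ∀ j : Fin (n + 2), T1 n ℓ j * Dm (n + 1) j m
          = (if j = ℓ then Dm (n + 1) ℓ m else 0)
            + (if j = jB then -2 * Dm (n + 1) jB m else 0)
            + (if j = jC then Dm (n + 1) jC m else 0) := by
        intro j
        by_cases hj0 : j = ℓ
        · subst hj0
          have c2 : ¬(j.1 = jB.1) := by simp [jB]; omega
          have c3 : ¬(j.1 = jC.1) := by simp [jC]; omega
          have hjB : ¬(j = jB) := fun h => c2 (by rw [h])
          have hjC : ¬(j = jC) := fun h => c3 (by rw [h])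
          simp [T1, hjB, hjC]
        · by_cases hj1 : j = jB
          · subst hj1
            have c1 : ¬(ℓ.1 = jB.1) := by simp [jB]; omega
            have c2 : ℓ.1 = jB.1 + 1 := by simp [jB]; omega
            have c4 : jB.1 ≠ 0 := by simp [jB]
            have hne : ¬(jB = ℓ) := fun h => c1 (by rw [h])
            have hne3 : ¬(jB = jC) := by
              intro h
              have : jB.1 = jC.1 := by rw [h]
              simp [jB, jC] at this
            simp [T1, c1, c2, c4, hne, hne3, -Fin.val_eq_zero_iff]
          · by_cases hj2 : j = jC
            · subst hj2
              have c1 : ¬(ℓ.1 = jC.1) := by simp [jC]; omega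
              have c2 : ¬(ℓ.1 = jC.1 + 1) := by simp [jC]; omega
              have c3 : ℓ.1 = jC.1 + 2 := by simp [jC]; omega
              have hne : ¬(jC = ℓ) := fun h => c1 (by rw [h])
              have hne2 : ¬(jC = jB) := by
                intro h
                have : jC.1 = jB.1 := by rw [h]
                simp [jB, jC] at this
              simp [T1, c1, c2, c3, hne, hne2]
            · have hj0' : j.1 ≠ ℓ.1 := fun h => hj0 (Fin.ext h)
              have hj1' : j.1 ≠ a + 1 := fun h => hj1 (Fin.ext (by simp [jB, h]))
              have hj2' : j.1 ≠ a := fun h => hj2 (Fin.ext (by simp [jC, h]))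
              have c1 : ¬(ℓ.1 = j.1) := fun h => hj0' h.symm
              have c2 : ¬(ℓ.1 = j.1 + 1) := by omega
              have c3 : ¬(ℓ.1 = j.1 + 2) := by omega
              simp [T1, c1, c2, c3, hj0, hj1, hj2]
      rw [Finset.sum_congr rfl (fun j _ => hsum j), Finset.sum_add_distrib,
        Finset.sum_add_distrib, Finset.sum_ite_eq' Finset.univ, Finset.sum_ite_eq' Finset.univ,
        Finset.sum_ite_eq' Finset.univ]
      simp only [Finset.mem_univ, if_true]
      have hB : jB.1 = a + 1 := rfl
      have hC : jC.1 = a := rfl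
      have hF : Fm n ℓ m = ((X:ℤ[X]) ^ a * (X + 1) ^ (2 * n - a)).coeff (2 * m.1) := by
        simp only [Fm, Matrix.of_apply, h0, h1, if_false]
        rfl
      rw [hF]
      simp only [Dm, Matrix.of_apply, hB, hC, hA]
      set e : ℕ := 2 * n - a with he
      have e1 : 2 * (n + 1) - (a + 2) = e := by omega
      have e2 : 2 * (n + 1) - (a + 1) = e + 1 := by omega
      have e3 : 2 * (n + 1) - a = e + 2 := by omega
      rw [e1, e2, e3]
      have hpoly : (X:ℤ[X]) ^ (a + 2) * (X + 1) ^ e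
          + (-2) * ((X:ℤ[X]) ^ (a + 1) * (X + 1) ^ (e + 1))
          + (X:ℤ[X]) ^ a * (X + 1) ^ (e + 2)
          = (X:ℤ[X]) ^ a * (X + 1) ^ e := by
        ring
      calc ((X:ℤ[X]) ^ (a+2) * (X + 1) ^ e).coeff (2 * m.1)
            + (-2) * ((X:ℤ[X]) ^ (a+1) * (X + 1) ^ (e+1)).coeff (2 * m.1)
            + ((X:ℤ[X]) ^ a * (X + 1) ^ (e+2)).coeff (2 * m.1)
          = ((X:ℤ[X]) ^ (a + 2) * (X + 1) ^ e
              + (-2) * ((X:ℤ[X]) ^ (a + 1) * (X + 1) ^ (e + 1))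
              + (X:ℤ[X]) ^ a * (X + 1) ^ (e + 2)).coeff (2 * m.1) := by
            simp only [coeff_add, coeff_neg, coeff_smul, neg_mul]
            have h2c : (((2:ℤ[X])) * ((X:ℤ[X]) ^ (a + 1) * (X + 1) ^ (e + 1))).coeff (2 * m.1)
                = 2 * ((X:ℤ[X]) ^ (a + 1) * (X + 1) ^ (e + 1)).coeff (2 * m.1) := by
              rw [show ((2:ℤ[X])) = C (2 : ℤ) from by simp, coeff_C_mul]
            rw [h2c]
        _ = ((X:ℤ[X]) ^ a * (X + 1) ^ e).coeff (2 * m.1) := by rw [hpoly]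

lemma hT2F (n : ℕ) : T2 n * Fm n = Em n := by
  ext ℓ m
  rw [Matrix.mul_apply]
  by_cases h1 : ℓ.1 = 1
  · -- the interesting row
    have hl : ℓ = ⟨1, by omega⟩ := Fin.ext h1
    have hsum : ∀ j : Fin (n + 2), T2 n ℓ j * Fm n j m
        = (if j.1 = 1 then -(((X:ℤ[X]) + 1) ^ (2 * n + 1)).coeff (2 * m.1)
           else if 2 ≤ j.1 then
             al n (j.1 - 2) * (((X:ℤ[X]) ^ (j.1 - 2) * (X + 1) ^ (2 * n - (j.1 - 2))).coeff (2 * m.1))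
           else 0) := by
      intro j
      by_cases hj1 : j.1 = 1
      · have : ℓ = j := Fin.ext (by omega)
        simp [T2, Fm, this, hj1, -Fin.val_eq_zero_iff]
      · by_cases hj2 : 2 ≤ j.1
        · have hne : ¬(ℓ = j) := fun h => hj1 (by rw [← h, h1])
          have hj0 : ¬(j.1 = 0) := by omega
          simp [T2, Fm, hne, h1, hj2, hj1, hj0, -Fin.val_eq_zero_iff]
        · have hj0 : j.1 = 0 := by omega
          have hne : ¬(ℓ = j) := fun h => by rw [h] at h1; omega
          simp [T2, hne, h1, hj2, hj1]
    rw [Finset.sum_congr rfl (fun j _ => hsum j)]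
    have hrange := Fin.sum_univ_eq_sum_range (fun t =>
        (if t = 1 then -(((X:ℤ[X]) + 1) ^ (2 * n + 1)).coeff (2 * m.1)
           else if 2 ≤ t then
             al n (t - 2) * (((X:ℤ[X]) ^ (t - 2) * (X + 1) ^ (2 * n - (t - 2))).coeff (2 * m.1))
           else 0)) (n + 2)
    rw [hrange, Finset.sum_range_succ', Finset.sum_range_succ']
    simp only [Nat.add_sub_cancel]
    have hgi : ∀ i ∈ range n, (if i + 1 + 1 = 1 then -(((X:ℤ[X]) + 1) ^ (2 * n + 1)).coeff (2 * m.1)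
           else if 2 ≤ i + 1 + 1 then
             al n (i + 1 + 1 - 2) * (((X:ℤ[X]) ^ (i + 1 + 1 - 2) * (X + 1) ^ (2 * n - (i + 1 + 1 - 2))).coeff (2 * m.1))
           else 0)
        = al n i * (((X:ℤ[X]) ^ i * (X + 1) ^ (2 * n - i)).coeff (2 * m.1)) := by
      intro i _
      have e : i + 1 + 1 - 2 = i := by omega
      rw [if_neg (by omega), if_pos (by omega), e]
    rw [Finset.sum_congr rfl hgi]
    norm_num
    -- use hfull
    have hp := hfull n m.1
    rw [Finset.sum_range_succ, al_top] at hp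
    have e2 : 2 * n - n = n := by omega
    rw [e2] at hp
    have hEm : Em n ℓ m = -(2 ^ n * ((X:ℤ[X]) ^ n * (X + 1) ^ n).coeff (2 * m.1)) := by
      simp [Em, h1, -Fin.val_eq_zero_iff]
    rw [hEm]
    linarith
  · -- other rows: T2 row is e_ℓ
    have hsum : ∀ j : Fin (n + 2), T2 n ℓ j * Fm n j m
        = if j = ℓ then Fm n ℓ m else 0 := by
      intro j
      by_cases hj : j = ℓ
      · subst hj
        simp [T2]
      · have hne : ¬(ℓ = j) := fun h => hj h.symm
        simp [T2, hne, h1, hj]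
    rw [Finset.sum_congr rfl (fun j _ => hsum j), Finset.sum_ite_eq' Finset.univ]
    simp only [Finset.mem_univ, if_true]
    by_cases h0 : ℓ.1 = 0
    · simp [Fm, Em, h0]
    · simp [Fm, Em, h0, h1]

lemma detT1 (n : ℕ) : (T1 n).det = 1 := by
  have htri : (T1 n).BlockTriangular OrderDual.toDual := by
    intro i j hij
    have h : i.1 < j.1 := hij
    have c1 : ¬(i.1 = j.1) := by omega
    have c2 : ¬(i.1 = j.1 + 1) := by omega
    have c3 : ¬(i.1 = j.1 + 2) := by omega
    simp [T1, c1, c2, c3]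
  rw [Matrix.det_of_lowerTriangular _ htri]
  have : ∀ i : Fin (n + 2), T1 n i i = 1 := by
    intro i
    simp [T1]
  simp [this]

lemma detT2 (n : ℕ) : (T2 n).det = 1 := by
  have htri : (T2 n).BlockTriangular id := by
    intro i j hij
    have h : j.1 < i.1 := hij
    have c1 : ¬(i = j) := by
      intro he
      rw [he] at h
      omega
    have c2 : ¬(i.1 = 1 ∧ 2 ≤ j.1) := by
      rintro ⟨ha, hb⟩
      omega
    simp [T2, c1, c2]
  rw [Matrix.det_of_upperTriangular htri]
  have : ∀ i : Fin (n + 2), T2 n i i = 1 := by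
    intro i
    simp [T2]
  simp [this]

lemma detEm (n : ℕ) : (Em n).det = 2 ^ n * (Dm n).det := by
  classical
  set ρ := finRotate (n + 2) with hρ
  have hrot : ((Em n).submatrix ρ id).det
      = (Equiv.Perm.sign ρ : ℤ) * (Em n).det := Matrix.det_permute _ _
  set G := (Em n).submatrix ρ id with hG
  have hval : ∀ i : Fin (n + 1), (ρ (Fin.castSucc i)).1 = i.1 + 1 := by
    intro i
    rw [hρ, finRotate_succ_apply, Fin.val_add_one]
    have : ¬(Fin.castSucc i = Fin.last (n + 1)) := by
      intro h
      have := congrArg Fin.val h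
      simp at this
      omega
    simp [this]
  have hlast : (ρ (Fin.last (n + 1))).1 = 0 := by
    rw [hρ, finRotate_succ_apply, Fin.val_add_one]
    simp
  have hcol : ∀ i : Fin (n + 2), G i (Fin.last (n + 1)) = if i = Fin.last (n + 1) then 1 else 0 := by
    intro i
    by_cases hi : i = Fin.last (n + 1)
    · subst hi
      simp only [hG, Matrix.submatrix_apply, id_eq, if_true]
      have : Em n (ρ (Fin.last (n + 1))) (Fin.last (n + 1)) = 1 := by
        simp only [Em, Matrix.of_apply, hlast, if_true]
        have hv : (Fin.last (n + 1)).1 = n + 1 := rfl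
        rw [hv, cpp]
        have : 2 * (n + 1) = 2 * n + 2 := by omega
        rw [this, Nat.choose_self]
        norm_num
      exact this
    · simp only [hG, Matrix.submatrix_apply, id_eq, hi, if_false]
      -- i.1 < n+1 so (ρ i).1 = i.1 + 1 ≥ 1
      have hlastv : (Fin.last (n + 1)).1 = n + 1 := rfl
      have hi' : i.1 < n + 1 := by
        have h2 := i.isLt
        have h3 : i.1 ≠ n + 1 := fun h => hi (Fin.ext (by rw [h, hlastv]))
        omega
      have hv : (ρ i).1 = i.1 + 1 := by
        have hcast : i = Fin.castSucc ⟨i.1, hi'⟩ := Fin.ext rfl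
        rw [hcast, hval]
        simp
      by_cases h1 : (ρ i).1 = 1
      · have hEe : Em n (ρ i) (Fin.last (n + 1))
            = -(2 ^ n * (((X:ℤ[X]) ^ n * (X + 1) ^ n).coeff (2 * (n + 1)))) := by
          simp [Em, h1, hlastv, -Fin.val_eq_zero_iff]
        rw [hEe, cXpp]
        rw [if_pos (by omega)]
        rw [Nat.choose_eq_zero_of_lt (by omega)]
        norm_num
      · have h0 : ¬((ρ i).1 = 0) := by omega
        have hEe : Em n (ρ i) (Fin.last (n + 1))
            = ((X:ℤ[X]) ^ ((ρ i).1 - 2) * (X + 1) ^ (2 * n - ((ρ i).1 - 2))).coeff (2 * (n + 1)) := by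
          simp [Em, h0, h1, hlastv, -Fin.val_eq_zero_iff]
        rw [hEe, cXpp]
        set a := (ρ i).1 - 2 with ha2
        have hrv := (ρ i).isLt
        have haley : a ≤ n := by omega
        rw [if_pos (by omega)]
        rw [Nat.choose_eq_zero_of_lt (by omega)]
        simp
  have hdetG : G.det = (G.submatrix (Fin.last (n + 1)).succAbove (Fin.last (n + 1)).succAbove).det := by
    rw [Matrix.det_succ_column G (Fin.last (n + 1))]
    rw [Finset.sum_eq_single (Fin.last (n + 1))]
    · rw [hcol, if_pos rfl]
      have hvlast : (Fin.last (n + 1) : Fin (n + 2)).1 = n + 1 := rfl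
      rw [hvlast]
      have : ((-1:ℤ)) ^ (n + 1 + (n + 1)) = 1 := by
        rw [← two_mul, pow_mul]
        norm_num
      rw [this]
      ring
    · intro b _ hb
      rw [hcol, if_neg hb]
      ring
    · intro h
      exact absurd (Finset.mem_univ _) h
  -- identify the minor
  set c : Fin (n + 1) → ℤ := fun i => if i = 0 then -(2 ^ n) else 1 with hc
  set σ : Equiv.Perm (Fin (n + 1)) := (finRotate (n + 1))⁻¹ with hσ
  have hσval : ∀ i : Fin (n + 1), σ i = i - 1 := by
    intro i
    rw [hσ, Equiv.Perm.inv_def, Equiv.symm_apply_eq, finRotate_succ_apply, sub_add_cancel]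
  have hminor : G.submatrix (Fin.last (n + 1)).succAbove (Fin.last (n + 1)).succAbove
      = Matrix.diagonal c * ((Dm n).submatrix σ id) := by
    ext i j
    rw [Matrix.diagonal_mul]
    simp only [Matrix.submatrix_apply, id_eq, Fin.succAbove_last, hG]
    have hvi : (ρ (Fin.castSucc i)).1 = i.1 + 1 := hval i
    have hvj : (Fin.castSucc j).1 = j.1 := rfl
    rw [hσval i]
    by_cases hi0 : i = 0
    · subst hi0
      have h1 : (ρ (Fin.castSucc 0)).1 = 1 := by rw [hvi]; rfl
      have hs : ((0 - 1 : Fin (n + 1))).1 = n := by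
        rw [Fin.coe_sub_one]
        simp
      simp only [Em, Matrix.of_apply, h1, if_false, if_true, hc, Dm, hs, hvj]
      have e : 2 * n - n = n := by omega
      rw [e]
      norm_num
    · have hi0' : i.1 ≠ 0 := fun h => hi0 (Fin.ext h)
      have h1 : ¬((ρ (Fin.castSucc i)).1 = 1) := by rw [hvi]; omega
      have h0 : ¬((ρ (Fin.castSucc i)).1 = 0) := by rw [hvi]; omega
      have hs : ((i - 1 : Fin (n + 1))).1 = i.1 - 1 := by
        rw [Fin.coe_sub_one, if_neg hi0]
      simp only [Em, Matrix.of_apply, h0, h1, if_false, hc, hi0, hi0', Dm, hs, hvj, hvi]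
      have e : i.1 + 1 - 2 = i.1 - 1 := by omega
      rw [e]
      norm_num
      exact fun h => absurd h hi0 
  have hdiag : (Matrix.diagonal c).det = -(2 ^ n) := by
    rw [Matrix.det_diagonal]
    rw [Finset.prod_eq_single (0 : Fin (n + 1))]
    · simp [hc]
    · intro b _ hb
      simp [hc, hb]
    · intro h
      exact absurd (Finset.mem_univ _) h
  have hperm : ((Dm n).submatrix σ id).det = ((-1:ℤ)) ^ n * (Dm n).det := by
    rw [Matrix.det_permute]
    congr 1
    rw [hσ, Equiv.Perm.sign_inv, sign_finRotate]
    push_cast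
    ring
  have hsign : (Equiv.Perm.sign ρ : ℤ) = ((-1:ℤ)) ^ (n + 1) := by
    rw [hρ, sign_finRotate]
    push_cast
    ring
  have hfin : ((-1:ℤ)) ^ (n + 1) * (Em n).det = -(2 ^ n) * (((-1:ℤ)) ^ n * (Dm n).det) := by
    rw [← hsign, ← hrot, hdetG, hminor, Matrix.det_mul, hdiag, hperm]
  have hsq : ((-1:ℤ)) ^ (n + 1) * ((-1:ℤ)) ^ (n + 1) = 1 := by
    rw [← pow_add, ← two_mul, pow_mul]
    norm_num
  calc (Em n).det = (((-1:ℤ)) ^ (n + 1) * ((-1:ℤ)) ^ (n + 1)) * (Em n).det := by rw [hsq]; ring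
    _ = ((-1:ℤ)) ^ (n + 1) * (((-1:ℤ)) ^ (n + 1) * (Em n).det) := by ring
    _ = ((-1:ℤ)) ^ (n + 1) * (-(2 ^ n) * (((-1:ℤ)) ^ n * (Dm n).det)) := by rw [hfin]
    _ = (((-1:ℤ)) ^ (n + 1) * ((-1:ℤ)) ^ (n + 1)) * (2 ^ n * (Dm n).det) := by ring
    _ = 2 ^ n * (Dm n).det := by rw [hsq]; ring

lemma detD (n : ℕ) : (Dm n).det = 2 ^ (n * (n - 1) / 2) := by
  induction n with
  | zero =>
    rw [Matrix.det_fin_one]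
    simp [Dm]
  | succ n ih =>
    have h1 : (Fm n).det = (Dm (n + 1)).det := by
      rw [← hT1D, Matrix.det_mul, detT1, one_mul]
    have h2 : (Em n).det = (Fm n).det := by
      rw [← hT2F, Matrix.det_mul, detT2, one_mul]
    have h3 : (Dm (n + 1)).det = 2 ^ n * (Dm n).det := by
      rw [← h1, ← h2, detEm]
    rw [h3, ih, ← pow_add]
    congr 1
    have he : (n + 1) * n = n * (n - 1) + 2 * n := by
      cases n with
      | zero => rfl
      | succ m =>
        simp [Nat.succ_sub_one]
        ring
    obtain ⟨k, hk⟩ : 2 ∣ n * (n - 1) := by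
      rcases Nat.even_or_odd n with h | h
      · obtain ⟨t, ht⟩ := h
        exact ⟨t * (n - 1), by rw [ht]; ring⟩
      · obtain ⟨t, ht⟩ := h
        have hnn : n - 1 = 2 * t := by omega
        exact ⟨n * t, by rw [hnn]; ring⟩
    simp only [Nat.add_sub_cancel]
    have h4 : (n + 1) * n = 2 * k + 2 * n := by omega
    omega


def delta (ℓ : ℕ) : ℤ := if ℓ = 0 then 1 else (-1:ℤ) ^ ℓ * 2 ^ (ℓ - 1)

def Pm (n : ℕ) : Matrix (Fin (n + 1)) (Fin (n + 1)) ℤ :=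
  Matrix.of fun ℓ j => if j.1 ≤ ℓ.1 then (-1:ℤ) ^ (ℓ.1 - j.1) * (ℓ.1.choose j.1 : ℤ) else 0

lemma detPm (n : ℕ) : (Pm n).det = 1 := by
  have htri : (Pm n).BlockTriangular OrderDual.toDual := by
    intro i j hij
    have h : i.1 < j.1 := hij
    have hn : ¬(j.1 ≤ i.1) := Nat.not_le.mpr h
    simp only [Pm, Matrix.of_apply, hn, if_false]
  rw [Matrix.det_of_lowerTriangular _ htri]
  have hd : ∀ i : Fin (n + 1), Pm n i i = 1 := by
    intro i
    simp [Pm]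
  simp [hd]

lemma prod_delta (n : ℕ) : ∏ i ∈ range (n + 1), delta i
    = (-1:ℤ) ^ (n * (n + 1) / 2) * 2 ^ (n * (n - 1) / 2) := by
  induction n with
  | zero => simp [delta]
  | succ n ih =>
    rw [Finset.prod_range_succ, ih]
    have hd : delta (n + 1) = (-1:ℤ) ^ (n + 1) * 2 ^ n := by
      simp [delta]
    rw [hd]
    obtain ⟨k, hk⟩ : 2 ∣ n * (n + 1) := (Nat.even_mul_succ_self n).two_dvd
    obtain ⟨l, hl⟩ : 2 ∣ n * (n - 1) := by
      rcases Nat.even_or_odd n with h | h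
      · obtain ⟨t, ht⟩ := h
        exact ⟨t * (n - 1), by rw [ht]; ring⟩
      · obtain ⟨t, ht⟩ := h
        have hnn : n - 1 = 2 * t := by omega
        exact ⟨n * t, by rw [hnn]; ring⟩
    have e1 : (n + 1) * (n + 1 + 1) = 2 * (k + (n + 1)) := by
      have : (n + 1) * (n + 1 + 1) = n * (n + 1) + 2 * (n + 1) := by ring
      omega
    have e2 : (n + 1) * (n + 1 - 1) = 2 * (l + n) := by
      have h3 : (n + 1) * n = n * (n - 1) + 2 * n := by
        cases n with
        | zero => rfl
        | succ m =>
          simp [Nat.succ_sub_one]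
          ring
      simp only [Nat.add_sub_cancel]
      omega
    have e1' : (n + 1) * (n + 1 + 1) / 2 = k + (n + 1) := by omega
    have e2' : (n + 1) * (n + 1 - 1) / 2 = l + n := by omega
    have e3 : n * (n + 1) / 2 = k := by omega
    have e4 : n * (n - 1) / 2 = l := by omega
    rw [e1', e2', e3, e4, pow_add, pow_add]
    ring

theorem main (n : ℕ) :
    Matrix.det (fun ℓ m : Fin (n + 1) =>
      ((∑ k ∈ Finset.range (m.1 + 1),
        (ℓ.1).choose (2 * k) * (2 * n - ℓ.1).choose (2 * (m.1 - k)) : ℕ) : ℤ)) =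
    (-1) ^ (n * (n + 1) / 2) * 2 ^ (n * (n - 1)) := by
  set B : Matrix (Fin (n + 1)) (Fin (n + 1)) ℤ := Matrix.of fun ℓ m =>
      ((∑ k ∈ Finset.range (m.1 + 1),
        (ℓ.1).choose (2 * k) * (2 * n - ℓ.1).choose (2 * (m.1 - k)) : ℕ) : ℤ) with hBdef
  show B.det = _
  have hBent : ∀ ℓ m : Fin (n + 1), B ℓ m = Bent n ℓ.1 m.1 := by
    intro ℓ m
    simp only [hBdef, Matrix.of_apply, Bent]
    push_cast
    rfl
  set Dg : Matrix (Fin (n + 1)) (Fin (n + 1)) ℤ := Matrix.diagonal (fun ℓ => delta ℓ.1) with hDg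
  have hPB : Pm n * B = Dg * Dm n := by
    ext ℓ m
    rw [Matrix.mul_apply]
    have hsummand : ∀ j : Fin (n + 1), Pm n ℓ j * B j m
        = (fun t => if t ≤ ℓ.1 then (-1:ℤ) ^ (ℓ.1 - t) * (ℓ.1.choose t : ℤ) * Bent n t m.1 else 0) j.1 := by
      intro j
      rw [hBent]
      simp only [Pm, Matrix.of_apply]
      split_ifs with h
      · ring
      · ring
    rw [Finset.sum_congr rfl (fun j _ => hsummand j),
      Fin.sum_univ_eq_sum_range (fun t => if t ≤ ℓ.1 then (-1:ℤ) ^ (ℓ.1 - t) * (ℓ.1.choose t : ℤ) * Bent n t m.1 else 0) (n + 1)]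
    have hsubset : range (ℓ.1 + 1) ⊆ range (n + 1) := by
      apply Finset.range_subset_range.mpr
      have := ℓ.isLt
      omega
    rw [← Finset.sum_subset hsubset]
    · have hin : ∀ t ∈ range (ℓ.1 + 1),
          (if t ≤ ℓ.1 then (-1:ℤ) ^ (ℓ.1 - t) * (ℓ.1.choose t : ℤ) * Bent n t m.1 else 0)
          = (-1:ℤ) ^ (ℓ.1 - t) * (ℓ.1.choose t : ℤ) * Bent n t m.1 := by
        intro t ht
        rw [if_pos (Nat.lt_succ_iff.mp (Finset.mem_range.mp ht))]
      rw [Finset.sum_congr rfl hin, stage1 n ℓ.1 m.1 (by have := ℓ.isLt; omega)]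
      rw [hDg, Matrix.diagonal_mul]
      simp only [Dm, Matrix.of_apply, delta]
    · intro t _ ht
      rw [if_neg (by simpa using ht)]
  have hdet : (Pm n).det * B.det = Dg.det * (Dm n).det := by
    rw [← Matrix.det_mul, ← Matrix.det_mul, hPB]
  rw [detPm, one_mul] at hdet
  have hDgdet : Dg.det = (-1:ℤ) ^ (n * (n + 1) / 2) * 2 ^ (n * (n - 1) / 2) := by
    rw [hDg, Matrix.det_diagonal, ← prod_delta n]
    exact Fin.prod_univ_eq_prod_range (fun i => delta i) (n + 1)
  rw [hdet, hDgdet, detD]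
  obtain ⟨l, hl⟩ : 2 ∣ n * (n - 1) := by
    rcases Nat.even_or_odd n with h | h
    · obtain ⟨t, ht⟩ := h
      exact ⟨t * (n - 1), by rw [ht]; ring⟩
    · obtain ⟨t, ht⟩ := h
      have hnn : n - 1 = 2 * t := by omega
      exact ⟨n * t, by rw [hnn]; ring⟩
  have e1 : n * (n - 1) / 2 = l := by omega
  have e2 : n * (n - 1) = l + l := by omega
  rw [e1, e2, pow_add]
  ring


end DetBEven

theorem det_B_even (n : ℕ) :
    Matrix.det (fun ℓ m : Fin (n + 1) =>
      ((∑ k ∈ Finset.range (m.1 + 1),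
        (ℓ.1).choose (2 * k) * (2 * n - ℓ.1).choose (2 * (m.1 - k)) : ℕ) : ℤ)) =
    (-1) ^ (n * (n + 1) / 2) * 2 ^ (n * (n - 1)) :=
  DetBEven.main n
end

section
/- For every natural number n, the determinant of the (n+1)×(n+1) matrix whose (ℓ,m)-entry (for ℓ,m ∈ {0,...,n}) is ∑_{k=0}^{m} C(ℓ,2k)·C(2n+1-ℓ, 2(m-k)) equals (-1)^{n(n+1)/2} · 2^{n²}. -/
open Polynomial Finset Matrix

noncomputable def fhAux : ℕ → Polynomial ℤ × Polynomial ℤ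
  | 0 => (1, 0)
  | (k+1) => ((fhAux k).1 + X * (fhAux k).2, (fhAux k).2 + (fhAux k).1)

noncomputable def ffP (k : ℕ) : Polynomial ℤ := (fhAux k).1
noncomputable def hhP (k : ℕ) : Polynomial ℤ := (fhAux k).2

lemma ffP_zero : ffP 0 = 1 := rfl
lemma hhP_zero : hhP 0 = 0 := rfl
lemma ffP_succ (k : ℕ) : ffP (k+1) = ffP k + X * hhP k := rfl
lemma hhP_succ (k : ℕ) : hhP (k+1) = hhP k + ffP k := rfl

lemma fh_add (a b : ℕ) :
    ffP (a+b) = ffP a * ffP b + X * hhP a * hhP b ∧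
    hhP (a+b) = ffP a * hhP b + hhP a * ffP b := by
  induction b with
  | zero => simp [ffP_zero, hhP_zero]
  | succ b ih =>
    obtain ⟨h1, h2⟩ := ih
    constructor
    · show ffP ((a+b)+1) = _
      rw [ffP_succ, h1, h2, ffP_succ, hhP_succ]; ring
    · show hhP ((a+b)+1) = _
      rw [hhP_succ, h1, h2, ffP_succ, hhP_succ]; ring

lemma fh_sq (a : ℕ) : ffP a ^ 2 = X * hhP a ^ 2 + (1 - X) ^ a := by
  induction a with
  | zero => simp [ffP_zero, hhP_zero]
  | succ a ih =>
    rw [ffP_succ, hhP_succ, pow_succ]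
    linear_combination (1 - (X : Polynomial ℤ)) * ih

lemma key_prod (a b : ℕ) :
    2 * (ffP a * ffP (a + b)) = ffP (2*a + b) + (1 - X)^a * ffP b := by
  have h2 := (fh_add a b).1
  have h3 := (fh_add a b).2
  have h4 := fh_sq a
  rw [show 2*a + b = a + (a + b) by ring, (fh_add a (a+b)).1, h2, h3]
  linear_combination (ffP b) * h4

lemma coeff_fh (k : ℕ) :
    (∀ i, (ffP k).coeff i = (k.choose (2*i) : ℤ)) ∧
    (∀ i, (hhP k).coeff i = (k.choose (2*i+1) : ℤ)) := by
  induction k with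
  | zero =>
    constructor <;> intro i <;> cases i <;>
      simp [ffP_zero, hhP_zero, coeff_one, Nat.choose, Nat.choose_eq_zero_of_lt]
  | succ k ih =>
    obtain ⟨h1, h2⟩ := ih
    constructor
    · intro i
      rw [ffP_succ, coeff_add]
      cases i with
      | zero =>
        simp [h1, mul_coeff_zero, coeff_X_zero]
      | succ i =>
        rw [coeff_X_mul, h1, h2]
        have h : (k+1).choose (2*(i+1)) = k.choose (2*i+1) + k.choose (2*(i+1)) := by
          rw [show 2*(i+1) = (2*i+1)+1 by ring]
          exact Nat.choose_succ_succ k (2*i+1)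
        push_cast [h]; ring
    · intro i
      rw [hhP_succ, coeff_add, h1, h2]
      have h := Nat.choose_succ_succ k (2*i)
      push_cast [h]; ring

lemma ffP_coeff (k i : ℕ) : (ffP k).coeff i = (k.choose (2*i) : ℤ) := (coeff_fh k).1 i

lemma ffP_natDegree_le (j : ℕ) : (ffP (2*j+1)).natDegree ≤ j := by
  rw [Polynomial.natDegree_le_iff_coeff_eq_zero]
  intro m hm
  rw [ffP_coeff]
  have : 2*j+1 < 2*m := by omega
  simp [Nat.choose_eq_zero_of_lt this]

lemma ffP_eval_one (k : ℕ) :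
    (ffP (k+1)).eval 1 = 2^k ∧ (hhP (k+1)).eval 1 = 2^k := by
  induction k with
  | zero => simp [ffP_succ, hhP_succ, ffP_zero, hhP_zero]
  | succ k ih =>
    obtain ⟨h1, h2⟩ := ih
    constructor
    · rw [ffP_succ, eval_add, eval_mul, eval_X, h1, h2]; ring
    · rw [hhP_succ, eval_add, h1, h2]; ring

lemma one_sub_X_pow_coeff (j m : ℕ) :
    ((1 - X : Polynomial ℤ)^j).coeff m = (-1)^m * (j.choose m : ℤ) := by
  have h : (1 - X : Polynomial ℤ)^j
      = ∑ k ∈ range (j+1), C ((-1)^k * (j.choose k : ℤ)) * X^k := by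
    rw [sub_eq_add_neg, add_comm, add_pow]
    refine Finset.sum_congr rfl fun k _ => ?_
    rw [one_pow, mul_one, C_mul, C_pow, C_neg, C_1, C_eq_natCast, neg_pow]
    ring
  rw [h, finset_sum_coeff]
  simp only [coeff_C_mul, coeff_X_pow, mul_ite, mul_one, mul_zero]
  rw [Finset.sum_ite_eq (range (j+1)) m]
  by_cases hm : m ∈ range (j+1)
  · simp [hm]
  · simp only [hm, if_false]
    have hj : j < m := by simp [Finset.mem_range] at hm; omega
    simp [Nat.choose_eq_zero_of_lt hj]

theorem det_B_odd (n : ℕ) :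
    Matrix.det (fun ℓ m : Fin (n + 1) =>
      ((∑ k ∈ Finset.range (m.1 + 1),
        (ℓ.1).choose (2 * k) * (2 * n + 1 - ℓ.1).choose (2 * (m.1 - k)) : ℕ) : ℤ)) =
    (-1) ^ (n * (n + 1) / 2) * 2 ^ (n ^ 2) := by
  classical
  set A : Matrix (Fin (n+1)) (Fin (n+1)) ℤ := (fun ℓ m : Fin (n + 1) =>
      ((∑ k ∈ Finset.range (m.1 + 1),
        (ℓ.1).choose (2 * k) * (2 * n + 1 - ℓ.1).choose (2 * (m.1 - k)) : ℕ) : ℤ)) with hA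
  set G0 : Matrix (Fin (n+1)) (Fin (n+1)) ℤ :=
    (fun ℓ m => ((1 - X)^ℓ.1 * ffP (2*(n - ℓ.1)+1)).coeff m.1) with hG0
  set L : Matrix (Fin (n+1)) (Fin (n+1)) ℤ :=
    (fun ℓ j => (if j = 0 then 1 else 0) + (if j = ℓ then 1 else 0)) with hL
  set W : Matrix (Fin (n+1)) (Fin (n+1)) ℤ :=
    (fun ℓ j => (X^ℓ.1 * ((ffP (2*(n - ℓ.1)+1)).comp (1 - X))).coeff j.1) with hW
  set V : Matrix (Fin (n+1)) (Fin (n+1)) ℤ :=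
    (fun j m => (((1 : Polynomial ℤ) - X)^j.1).coeff m.1) with hV
  -- entry of A as coefficient of a product
  have hAcoeff : ∀ ℓ m : Fin (n+1),
      A ℓ m = (ffP ℓ.1 * ffP (2*n+1 - ℓ.1)).coeff m.1 := by
    intro ℓ m
    rw [hA, coeff_mul, Finset.Nat.sum_antidiagonal_eq_sum_range_succ_mk]
    push_cast
    refine Finset.sum_congr rfl fun k _ => ?_
    rw [ffP_coeff, ffP_coeff]
  -- Step A : 2 • A = L * G0
  have stepA : (2 : ℤ) • A = L * G0 := by
    ext ℓ m
    rw [Matrix.smul_apply, smul_eq_mul, Matrix.mul_apply]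
    have hsum : ∑ j, L ℓ j * G0 j m = G0 0 m + G0 ℓ m := by
      simp only [hL, add_mul, ite_mul, one_mul, zero_mul]
      rw [Finset.sum_add_distrib, Finset.sum_ite_eq' Finset.univ (0 : Fin (n+1)),
        Finset.sum_ite_eq' Finset.univ ℓ]
      simp
    rw [hsum, hAcoeff]
    have hl : ℓ.1 ≤ n := by omega
    have e1 : 2*n+1 - ℓ.1 = ℓ.1 + (2*(n - ℓ.1)+1) := by omega
    have kp := key_prod ℓ.1 (2*(n - ℓ.1)+1)
    have kc := congrArg (fun p => Polynomial.coeff p m.1) kp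
    simp only [coeff_add, coeff_ofNat_mul] at kc
    rw [e1, kc, show 2*ℓ.1 + (2*(n - ℓ.1)+1) = 2*n+1 by omega]
    have hG00 : G0 0 m = (ffP (2*n+1)).coeff m.1 := by
      simp only [hG0]; simp
    rw [hG00]
  -- Step B : G0 = W * V
  have stepB : G0 = W * V := by
    ext ℓ m
    rw [Matrix.mul_apply]; simp only [hG0, hW, hV]
    have hl : ℓ.1 ≤ n := by omega
    set b := 2*(n - ℓ.1)+1 with hb
    set q : Polynomial ℤ := X^ℓ.1 * ((ffP b).comp (1 - X)) with hq
    have hdeg1X : ((1 - X : Polynomial ℤ)).natDegree = 1 := by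
      rw [show (1 - X : Polynomial ℤ) = -(X - C 1) by rw [C_1]; ring]
      rw [natDegree_neg, natDegree_X_sub_C]
    have hqdeg : q.natDegree < n + 1 := by
      have h1 : q.natDegree ≤ ℓ.1 + ((ffP b).comp (1 - X)).natDegree :=
        le_trans (natDegree_mul_le) (by simp [natDegree_X_pow])
      have h2 : ((ffP b).comp (1 - X)).natDegree ≤ (ffP b).natDegree * 1 := by
        rw [← hdeg1X]; exact natDegree_comp_le
      have h3 : (ffP b).natDegree ≤ n - ℓ.1 := ffP_natDegree_le _
      omega
    have hcomp : q.comp (1 - X) = (1 - X)^ℓ.1 * ffP b := by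
      rw [hq, mul_comp, pow_comp, X_comp, comp_assoc]
      have : ((1 - X : Polynomial ℤ)).comp (1 - X) = X := by
        rw [sub_comp, one_comp, X_comp]; ring
      rw [this, comp_X]
    rw [← hcomp, comp_eq_sum_left,
      Polynomial.sum_over_range' q (fun k => by simp) (n+1) hqdeg,
      finset_sum_coeff]
    rw [Fin.sum_univ_eq_sum_range (fun j => q.coeff j * ((1 - X : Polynomial ℤ)^j).coeff m.1)]
    refine Finset.sum_congr rfl fun k _ => ?_
    rw [coeff_C_mul]
  -- determinants of the triangular factors
  have detL : L.det = 2 := by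
    have ht : L.BlockTriangular OrderDual.toDual := by
      intro i j hij
      have : i < j := hij
      simp only [hL]
      have h1 : ¬ (j = 0) := by
        intro h; rw [h] at this; exact absurd this (by simp)
      have h2 : ¬ (j = i) := by intro h; rw [h] at this; exact lt_irrefl _ this
      simp [h1, h2]
    rw [Matrix.det_of_lowerTriangular L ht]
    rw [Fin.prod_univ_succ]
    have : ∀ i : Fin n, L i.succ i.succ = 1 := by
      intro i; simp only [hL]; simp [Fin.succ_ne_zero]
    simp [hL, Fin.succ_ne_zero]
  have detW : W.det = 2^(n*(n+1)) := by
    have ht : W.BlockTriangular id := by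
      intro i j hij
      have hij' : (j : ℕ) < i := hij
      simp only [hW]
      rw [mul_comm, coeff_mul_X_pow']
      simp [Nat.not_le.mpr hij']
    rw [Matrix.det_of_upperTriangular ht]
    have hdiag : ∀ ℓ : Fin (n+1), W ℓ ℓ = 2^(2*(n - ℓ.1)) := by
      intro ℓ
      simp only [hW]
      have := Polynomial.coeff_X_pow_mul ((ffP (2*(n - ℓ.1)+1)).comp (1 - X)) ℓ.1 0
      rw [zero_add] at this
      rw [this, coeff_zero_eq_eval_zero, eval_comp]
      simp only [eval_sub, eval_one, eval_X, sub_zero]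
      exact (ffP_eval_one (2*(n - ℓ.1))).1
    calc ∏ ℓ : Fin (n+1), W ℓ ℓ = ∏ ℓ : Fin (n+1), (2:ℤ)^(2*(n - ℓ.1)) :=
          Finset.prod_congr rfl fun ℓ _ => hdiag ℓ
      _ = 2^(∑ ℓ : Fin (n+1), 2*(n - ℓ.1)) := Finset.prod_pow_eq_pow_sum _ _ _
      _ = 2^(n*(n+1)) := by
          congr 1
          rw [Fin.sum_univ_eq_sum_range (fun i => 2*(n - i))]
          have hr : ∑ i ∈ range (n+1), (n - i) = ∑ i ∈ range (n+1), i := by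
            have := Finset.sum_range_reflect (fun i => i) (n+1)
            simp only [Nat.add_sub_cancel] at this
            rw [← this]
          have hg := Finset.sum_range_id_mul_two (n+1)
          simp only [Nat.add_sub_cancel] at hg
          rw [← Finset.mul_sum, hr, Nat.mul_comm n (n+1), ← hg, Nat.mul_comm]
  have detV : V.det = (-1)^(n*(n+1)/2) := by
    have ht : V.BlockTriangular OrderDual.toDual := by
      intro i j hij
      have hij' : (i : ℕ) < j := hij
      simp only [hV]
      rw [one_sub_X_pow_coeff]
      simp [Nat.choose_eq_zero_of_lt hij']
    rw [Matrix.det_of_lowerTriangular V ht]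
    have hdiag : ∀ j : Fin (n+1), V j j = (-1:ℤ)^(j.1) := by
      intro j; simp only [hV]; rw [one_sub_X_pow_coeff, Nat.choose_self]; ring
    calc ∏ j : Fin (n+1), V j j = ∏ j : Fin (n+1), (-1:ℤ)^(j.1) :=
          Finset.prod_congr rfl fun j _ => hdiag j
      _ = (-1)^(∑ j : Fin (n+1), j.1) := Finset.prod_pow_eq_pow_sum _ _ _
      _ = (-1)^(n*(n+1)/2) := by
          congr 1
          rw [Fin.sum_univ_eq_sum_range (fun i => i)]
          have hg := Finset.sum_range_id_mul_two (n+1)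
          simp only [Nat.add_sub_cancel] at hg
          rw [Nat.mul_comm n (n+1), ← hg]
          omega
  -- put everything together
  have hfinal : (2:ℤ)^(n+1) * A.det = 2 * (2^(n*(n+1)) * (-1)^(n*(n+1)/2)) := by
    have h1 : ((2:ℤ) • A).det = (2:ℤ)^(n+1) * A.det := by
      rw [Matrix.det_smul]
      simp
    rw [← h1, stepA, stepB, ← Matrix.mul_assoc, Matrix.det_mul, Matrix.det_mul,
      detL, detW, detV]
    ring
  have h2 : (2:ℤ)^(n+1) * ((-1)^(n*(n+1)/2) * 2^(n^2))
      = 2 * (2^(n*(n+1)) * (-1)^(n*(n+1)/2)) := by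
    rw [show n*(n+1) = n^2 + n by ring]
    ring
  have := hfinal.trans h2.symm
  exact mul_left_cancel₀ (pow_ne_zero _ (two_ne_zero)) this
end

section
/- For every natural number n ≥ 1 and every ℓ ∈ {0,...,n-1}, one has ∑_{m=0}^{n} ∑_{k=0}^{m} (-1)^m · C(ℓ,2k)·C(2n-ℓ,2(m-k))·C(n,m) / C(2n,2m) = 0. -/
open Finset Polynomial

namespace KernelVectorAux

/-- `D m = (2m-1)!!` as a rational number. -/
def D : ℕ → ℚ
  | 0 => 1
  | m+1 => (2*m+1) * D m

lemma D_succ (m : ℕ) : D (m+1) = (2*(m:ℚ)+1) * D m := rfl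

lemma D_pos (m : ℕ) : 0 < D m := by
  induction m with
  | zero => norm_num [D]
  | succ m ih => rw [D_succ]; positivity

lemma D_ne_zero (m : ℕ) : D m ≠ 0 := (D_pos m).ne'

lemma D_fact (m : ℕ) : (2:ℚ)^m * (Nat.factorial m) * D m = Nat.factorial (2*m) := by
  induction m with
  | zero => simp [D]
  | succ m ih =>
      have h2 : 2*(m+1) = 2*m+1+1 := by ring
      rw [h2, D_succ, Nat.factorial_succ, Nat.factorial_succ, Nat.factorial_succ]
      push_cast
      push_cast at ih
      linear_combination (2*((m:ℚ)+1))*(2*m+1)*ih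

lemma choose_mul_D (n m : ℕ) (h : m ≤ n) :
    (n.choose m : ℚ) * D n = ((2*n).choose (2*m) : ℚ) * (D m * D (n-m)) := by
  have h2 : 2*m ≤ 2*n := by omega
  have hnm : 2*n - 2*m = 2*(n-m) := by omega
  rw [Nat.cast_choose ℚ h, Nat.cast_choose ℚ h2, hnm]
  have e1 := D_fact n
  have e2 := D_fact m
  have e3 := D_fact (n-m)
  have f1 : ((Nat.factorial n : ℚ)) ≠ 0 := Nat.cast_ne_zero.mpr (Nat.factorial_ne_zero _)
  have f2 : ((Nat.factorial m : ℚ)) ≠ 0 := Nat.cast_ne_zero.mpr (Nat.factorial_ne_zero _)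
  have f3 : ((Nat.factorial (n-m) : ℚ)) ≠ 0 := Nat.cast_ne_zero.mpr (Nat.factorial_ne_zero _)
  have f4 : ((Nat.factorial (2*m) : ℚ)) ≠ 0 := Nat.cast_ne_zero.mpr (Nat.factorial_ne_zero _)
  have f5 : ((Nat.factorial (2*(n-m)) : ℚ)) ≠ 0 := Nat.cast_ne_zero.mpr (Nat.factorial_ne_zero _)
  rw [← e1, ← e2, ← e3]
  have hp : (2:ℚ)^n = 2^m * 2^(n-m) := by
    rw [← pow_add]; congr 1; omega
  rw [hp]
  field_simp [D_ne_zero m, D_ne_zero (n-m), D_ne_zero n]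

/-- The Gauss-type alternating sum. -/
def Gsum (c : ℕ) : ℚ :=
  ∑ j ∈ range (c+1), (-1:ℚ)^j * ((2*c).choose (2*j) : ℚ) * (D j * D (c-j))

lemma pascal2 (c j : ℕ) : (2*c+2).choose (2*j+2)
    = (2*c).choose (2*j) + 2*((2*c).choose (2*j+1)) + (2*c).choose (2*j+2) := by
  rw [show 2*c+2 = (2*c+1)+1 from rfl, show 2*j+2 = (2*j+1)+1 from rfl,
    Nat.choose_succ_succ, Nat.choose_succ_succ, Nat.choose_succ_succ (2*c) (2*j+1)]
  simp only [Nat.succ_eq_add_one]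
  omega

lemma choose_cast_succ (c j : ℕ) (h : j ≤ c) :
    ((2*c).choose (2*j+1) : ℚ) * (2*j+1) = ((2*c).choose (2*j) : ℚ) * (2*(c:ℚ) - 2*j) := by
  have hnat := Nat.choose_succ_right_eq (2*c) (2*j)
  have h2j : 2*j ≤ 2*c := by omega
  calc ((2*c).choose (2*j+1) : ℚ) * (2*j+1)
      = (((2*c).choose (2*j+1) * (2*j+1) : ℕ) : ℚ) := by push_cast; ring
    _ = (((2*c).choose (2*j) * (2*c - 2*j) : ℕ) : ℚ) := by rw [hnat]
    _ = ((2*c).choose (2*j) : ℚ) * (2*(c:ℚ) - 2*j) := by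
        rw [Nat.cast_mul, Nat.cast_sub h2j]; push_cast; ring

lemma Gsum_succ (c : ℕ) : Gsum (c+1) = -(2*c) * Gsum c := by
  set S1 := ∑ j ∈ range (c+1), (-1:ℚ)^j * ((2*c).choose (2*j+2) : ℚ) * (D (j+1) * D (c-j)) with hS1def
  set S2 := ∑ j ∈ range (c+1), (-1:ℚ)^j * ((2*c).choose (2*j+1) : ℚ) * (D (j+1) * D (c-j)) with hS2def
  set S3 := ∑ j ∈ range (c+1), (-1:ℚ)^j * ((2*c).choose (2*j) : ℚ) * (D (j+1) * D (c-j)) with hS3def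
  set Q := ∑ j ∈ range (c+1), (-1:ℚ)^j * ((2*c).choose (2*j) : ℚ) * (D j * D (c+1-j)) with hQdef
  have expand : Gsum (c+1) = D (c+1) - S1 - 2*S2 - S3 := by
    rw [Gsum, sum_range_succ']
    have e0 : (-1:ℚ)^0 * ((2*(c+1)).choose (2*0) : ℚ) * (D 0 * D (c+1-0)) = D (c+1) := by
      simp [D]
    rw [e0]
    have merge : ∑ j ∈ range (c+1),
        ((-1:ℚ)^(j+1) * ((2*(c+1)).choose (2*(j+1)) : ℚ) * (D (j+1) * D (c+1-(j+1)))
          + ((-1:ℚ)^j * ((2*c).choose (2*j+2) : ℚ) * (D (j+1) * D (c-j))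
            + 2*((-1:ℚ)^j * ((2*c).choose (2*j+1) : ℚ) * (D (j+1) * D (c-j)))
            + (-1:ℚ)^j * ((2*c).choose (2*j) : ℚ) * (D (j+1) * D (c-j)))) = 0 := by
      apply sum_eq_zero
      intro j hj
      have h1 : 2*(c+1) = 2*c+2 := by ring
      have h2 : 2*(j+1) = 2*j+2 := by ring
      have h3 : c+1-(j+1) = c-j := by omega
      rw [h1, h2, h3, pascal2]
      push_cast
      ring
    rw [sum_add_distrib, sum_add_distrib, sum_add_distrib, ← mul_sum] at merge
    rw [← hS1def, ← hS2def, ← hS3def] at merge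
    linarith [merge]
  have hS1 : S1 + Q = D (c+1) := by
    have hQ' : Q = ∑ j ∈ range c,
        (-1:ℚ)^(j+1) * ((2*c).choose (2*(j+1)) : ℚ) * (D (j+1) * D (c+1-(j+1))) + D (c+1) := by
      rw [hQdef, sum_range_succ']
      congr 1
      simp [D]
    have hlast : (-1:ℚ)^c * ((2*c).choose (2*c+2) : ℚ) * (D (c+1) * D (c-c)) = 0 := by
      rw [Nat.choose_eq_zero_of_lt (by omega)]
      simp
    have hS1' : S1 = ∑ j ∈ range c, (-1:ℚ)^j * ((2*c).choose (2*j+2) : ℚ) * (D (j+1) * D (c-j)) := by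
      rw [hS1def, sum_range_succ, hlast, add_zero]
    have merge : ∑ j ∈ range c,
        ((-1:ℚ)^j * ((2*c).choose (2*j+2) : ℚ) * (D (j+1) * D (c-j))
          + (-1:ℚ)^(j+1) * ((2*c).choose (2*(j+1)) : ℚ) * (D (j+1) * D (c+1-(j+1)))) = 0 := by
      apply sum_eq_zero
      intro j hj
      have h2 : 2*(j+1) = 2*j+2 := by ring
      have h3 : c+1-(j+1) = c-j := by omega
      rw [h2, h3]
      ring
    rw [sum_add_distrib] at merge
    rw [hS1', hQ']
    linarith [merge]
  have key : Q - 2*S2 - S3 = -(2*c) * Gsum c := by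
    have merge : ∑ j ∈ range (c+1),
        ((-1:ℚ)^j * ((2*c).choose (2*j) : ℚ) * (D j * D (c+1-j))
          - 2*((-1:ℚ)^j * ((2*c).choose (2*j+1) : ℚ) * (D (j+1) * D (c-j)))
          - (-1:ℚ)^j * ((2*c).choose (2*j) : ℚ) * (D (j+1) * D (c-j))
          - (-(2*(c:ℚ))) * ((-1:ℚ)^j * ((2*c).choose (2*j) : ℚ) * (D j * D (c-j)))) = 0 := by
      apply sum_eq_zero
      intro j hj
      have hj' : j ≤ c := by
        have := mem_range.mp hj; omega
      have h1 : c+1-j = (c-j)+1 := by omega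
      have hc : ((c-j : ℕ) : ℚ) = (c:ℚ) - j := by
        rw [Nat.cast_sub hj']
      rw [h1, D_succ, D_succ j]
      have hch := choose_cast_succ c j hj'
      rw [hc]
      linear_combination (-2 * (-1:ℚ)^j * (D j * D (c-j))) * hch
    rw [sum_sub_distrib, sum_sub_distrib, sum_sub_distrib, ← mul_sum, ← mul_sum] at merge
    rw [← hQdef, ← hS2def, ← hS3def, ← Gsum] at merge
    linarith [merge]
  linarith [expand, hS1, key]

lemma Gsum_eq_zero (c : ℕ) (hc : 1 ≤ c) : Gsum c = 0 := by
  induction c with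
  | zero => omega
  | succ c ih =>
      rcases Nat.eq_zero_or_pos c with h | h
      · subst h
        rw [Gsum_succ]
        norm_num
      · rw [Gsum_succ, ih h]
        ring

/-- The binomial transform of shifted double factorials. -/
def A (a p s : ℕ) : ℚ :=
  ∑ i ∈ range (a+1), (a.choose i : ℚ) * (D (p+i) * D (s + (a - i)))

lemma A_succ (a p s : ℕ) : A (a+1) p s = (2*((p:ℚ)+s+a)+2) * A a p s := by
  set PA := ∑ i ∈ range (a+1), (a.choose i : ℚ) * (D (p+i+1) * D (s+(a-i))) with hPAdef
  set PB := ∑ i ∈ range (a+1), (a.choose (i+1) : ℚ) * (D (p+i+1) * D (s+(a-i))) with hPBdef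
  set W := ∑ i ∈ range (a+1),
      (a.choose i : ℚ) * (2*((s:ℚ)+((a-i : ℕ):ℚ))+1) * (D (p+i) * D (s+(a-i))) with hWdef
  have expand : A (a+1) p s = PA + PB + D p * D (s+(a+1)) := by
    rw [A, sum_range_succ']
    have e0 : ((a+1).choose 0 : ℚ) * (D (p+0) * D (s + (a+1-0))) = D p * D (s+(a+1)) := by
      norm_num
    rw [e0]
    have merge : ∑ i ∈ range (a+1),
        (((a+1).choose (i+1) : ℚ) * (D (p+(i+1)) * D (s + (a+1-(i+1))))
          - ((a.choose i : ℚ) * (D (p+i+1) * D (s+(a-i)))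
             + (a.choose (i+1) : ℚ) * (D (p+i+1) * D (s+(a-i))))) = 0 := by
      apply sum_eq_zero
      intro i hi
      have h1 : a+1-(i+1) = a-i := by omega
      have h2 : p+(i+1) = p+i+1 := by omega
      rw [h1, h2, Nat.choose_succ_succ]
      push_cast
      ring
    rw [sum_sub_distrib, sum_add_distrib] at merge
    rw [← hPAdef, ← hPBdef] at merge
    linarith [merge]
  have hPB : PB + D p * D (s+(a+1)) = W := by
    have hlast : (a.choose (a+1) : ℚ) * (D (p+a+1) * D (s+(a-a))) = 0 := by
      rw [Nat.choose_eq_zero_of_lt (by omega)]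
      simp
    have hPB' : PB = ∑ i ∈ range a, (a.choose (i+1) : ℚ) * (D (p+i+1) * D (s+(a-i))) := by
      rw [hPBdef, sum_range_succ, hlast, add_zero]
    have hW' : W = ∑ i ∈ range a,
        (a.choose (i+1) : ℚ) * (2*((s:ℚ)+((a-(i+1) : ℕ):ℚ))+1) * (D (p+(i+1)) * D (s+(a-(i+1))))
        + (a.choose 0 : ℚ) * (2*((s:ℚ)+((a-0 : ℕ):ℚ))+1) * (D (p+0) * D (s+(a-0))) := by
      rw [hWdef, sum_range_succ']
    have merge : ∑ i ∈ range a,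
        ((a.choose (i+1) : ℚ) * (D (p+i+1) * D (s+(a-i)))
          - (a.choose (i+1) : ℚ) * (2*((s:ℚ)+((a-(i+1) : ℕ):ℚ))+1) * (D (p+(i+1)) * D (s+(a-(i+1))))) = 0 := by
      apply sum_eq_zero
      intro i hi
      have hi' : i < a := mem_range.mp hi
      have h1 : s+(a-i) = (s+(a-(i+1)))+1 := by omega
      have h2 : ((a-(i+1) : ℕ):ℚ) = (s+(a-(i+1)) : ℕ) - (s:ℚ) := by
        have : ((s+(a-(i+1)) : ℕ):ℚ) = (s:ℚ) + ((a-(i+1) : ℕ):ℚ) := by push_cast; ring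
        rw [this]; ring
      rw [h1, D_succ (s+(a-(i+1))), h2]
      have h3 : p+(i+1) = p+i+1 := by omega
      rw [h3]
      ring
    have hlast2 : (a.choose 0 : ℚ) * (2*((s:ℚ)+((a-0 : ℕ):ℚ))+1) * (D (p+0) * D (s+(a-0)))
        = D p * D (s+(a+1)) := by
      have h1 : s+(a+1) = (s+a)+1 := by omega
      rw [h1, D_succ (s+a)]
      norm_num
      ring
    rw [sum_sub_distrib] at merge
    rw [← hPB'] at merge
    rw [hW', hlast2.symm]
    linarith [merge]
  have hPA : PA = ∑ i ∈ range (a+1),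
      (a.choose i : ℚ) * (2*((p:ℚ)+i)+1) * (D (p+i) * D (s+(a-i))) := by
    apply sum_congr rfl
    intro i hi
    rw [show p+i+1 = (p+i)+1 from rfl, D_succ (p+i)]
    push_cast
    ring
  have final : ∑ i ∈ range (a+1),
      ((a.choose i : ℚ) * (2*((p:ℚ)+i)+1) * (D (p+i) * D (s+(a-i)))
        + (a.choose i : ℚ) * (2*((s:ℚ)+((a-i : ℕ):ℚ))+1) * (D (p+i) * D (s+(a-i)))
        - (2*((p:ℚ)+s+a)+2) * ((a.choose i : ℚ) * (D (p+i) * D (s + (a-i))))) = 0 := by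
    apply sum_eq_zero
    intro i hi
    have hi' : i ≤ a := by have := mem_range.mp hi; omega
    have hc : ((a-i : ℕ):ℚ) = (a:ℚ) - i := by rw [Nat.cast_sub hi']
    rw [hc]
    ring
  rw [sum_sub_distrib, sum_add_distrib, ← mul_sum] at final
  rw [← hPA, ← hWdef, ← A] at final
  linarith [expand, hPB, final]

def K : ℕ → ℕ → ℚ
  | 0, _ => 1
  | a+1, q => (2*((q:ℚ)+a)+2) * K a q

lemma A_closed (a p s : ℕ) : A a p s = K a (p+s) * (D p * D s) := by
  induction a with
  | zero => simp [A, K]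
  | succ a ih =>
      rw [A_succ, ih, K]
      push_cast
      ring

lemma even_odd_split (f : ℕ → ℚ) (m : ℕ) :
    ∑ j ∈ range (2*m+1), f j
      = ∑ k ∈ range (m+1), f (2*k) + ∑ k ∈ range m, f (2*k+1) := by
  induction m with
  | zero => simp
  | succ m ih =>
      have h : 2*(m+1)+1 = (2*m+1)+1+1 := by ring
      rw [h, sum_range_succ, sum_range_succ, ih, sum_range_succ (fun k => f (2*k)) (m+1),
        sum_range_succ (fun k => f (2*k+1)) m]
      have e1 : 2*m+1+1 = 2*(m+1) := by ring
      rw [e1]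
      ring

lemma I1 (ℓ N m : ℕ) (h : ℓ ≤ N) :
    ∑ j ∈ range (2*m+1), (ℓ.choose j : ℚ) * ((N-ℓ).choose (2*m-j) : ℚ)
      = (N.choose (2*m) : ℚ) := by
  have hv := Nat.add_choose_eq ℓ (N-ℓ) (2*m)
  rw [Finset.Nat.sum_antidiagonal_eq_sum_range_succ_mk] at hv
  have hN : ℓ + (N-ℓ) = N := by omega
  rw [hN] at hv
  rw [hv]
  push_cast
  rfl

lemma coeff_one_sub_X_pow (ℓ j : ℕ) :
    ((1 - X : ℚ[X])^ℓ).coeff j = (-1)^j * (ℓ.choose j : ℚ) := by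
  have h : (1 - X : ℚ[X]) = C (-1) * (X + C (-1)) := by
    rw [map_neg, C_1]; ring
  rw [h, mul_pow, ← map_pow, coeff_C_mul, coeff_X_add_C_pow]
  rcases le_or_gt j ℓ with hj | hj
  · have e1 : ((-1:ℚ))^ℓ = (-1)^(ℓ-j) * (-1)^j := by
      rw [← pow_add]; congr 1; omega
    have e2 : ((-1:ℚ)^(ℓ-j))^2 = 1 := by
      rw [← pow_mul, mul_comm, pow_mul, neg_one_sq, one_pow]
    calc ((-1:ℚ))^ℓ * ((-1)^(ℓ-j) * (ℓ.choose j : ℚ))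
        = ((-1:ℚ)^(ℓ-j))^2 * ((-1)^j * (ℓ.choose j : ℚ)) := by rw [e1]; ring
      _ = (-1)^j * (ℓ.choose j : ℚ) := by rw [e2, one_mul]
  · rw [Nat.choose_eq_zero_of_lt hj]
    simp

lemma one_sub_X_sq_pow (ℓ : ℕ) :
    (1 - X^2 : ℚ[X])^ℓ = ∑ i ∈ range (ℓ+1), C ((-1:ℚ)^i * (ℓ.choose i : ℚ)) * X^(2*i) := by
  have h : (1 - X^2 : ℚ[X]) = -X^2 + 1 := by ring
  rw [h, add_pow]
  apply sum_congr rfl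
  intro i hi
  have : ((ℓ.choose i : ℕ) : ℚ[X]) = C ((ℓ.choose i : ℚ)) := by
    simp
  rw [one_pow, mul_one, this]
  rw [neg_pow, ← C_1, ← C_neg, ← C_pow, pow_mul, C_mul]
  ring

lemma I2 (n ℓ m : ℕ) (h : ℓ ≤ n) :
    ∑ j ∈ range (2*m+1), (-1:ℚ)^j * (ℓ.choose j : ℚ) * ((2*n-ℓ).choose (2*m-j) : ℚ)
      = ∑ i ∈ range (m+1), (-1:ℚ)^i * (ℓ.choose i : ℚ) * ((2*(n-ℓ)).choose (2*(m-i)) : ℚ) := by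
  set b := n - ℓ with hb
  have hexp : 2*n - ℓ = ℓ + 2*b := by omega
  have hpoly : ((1-X : ℚ[X])^ℓ * (1+X)^(2*n-ℓ)) = (1 - X^2)^ℓ * (1+X)^(2*b) := by
    rw [hexp, pow_add, ← mul_assoc, ← mul_pow]
    have : ((1-X : ℚ[X]) * (1+X)) = 1 - X^2 := by ring
    rw [this]
  have lhs_eq : ((1-X : ℚ[X])^ℓ * (1+X)^(2*n-ℓ)).coeff (2*m)
      = ∑ j ∈ range (2*m+1), (-1:ℚ)^j * (ℓ.choose j : ℚ) * ((2*n-ℓ).choose (2*m-j) : ℚ) := by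
    rw [coeff_mul, Finset.Nat.sum_antidiagonal_eq_sum_range_succ_mk]
    apply sum_congr rfl
    intro j hj
    rw [coeff_one_sub_X_pow, coeff_one_add_X_pow]
  have rhs_eq : ((1 - X^2 : ℚ[X])^ℓ * (1+X)^(2*b)).coeff (2*m)
      = ∑ i ∈ range (ℓ+1), (if 2*i ≤ 2*m then
          (-1:ℚ)^i * (ℓ.choose i : ℚ) * ((2*b).choose (2*m-2*i) : ℚ) else 0) := by
    rw [one_sub_X_sq_pow, sum_mul, finset_sum_coeff]
    apply sum_congr rfl
    intro i hi
    rw [mul_assoc, coeff_C_mul, coeff_X_pow_mul']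
    rw [coeff_one_add_X_pow]
    split_ifs with hcond <;> ring
  have conv : ∑ i ∈ range (ℓ+1), (if 2*i ≤ 2*m then
          (-1:ℚ)^i * (ℓ.choose i : ℚ) * ((2*b).choose (2*m-2*i) : ℚ) else 0)
      = ∑ i ∈ range (m+1), (-1:ℚ)^i * (ℓ.choose i : ℚ) * ((2*b).choose (2*(m-i)) : ℚ) := by
    have left : ∑ i ∈ range (ℓ+1), (if 2*i ≤ 2*m then
          (-1:ℚ)^i * (ℓ.choose i : ℚ) * ((2*b).choose (2*m-2*i) : ℚ) else 0)
        = ∑ i ∈ range (ℓ+m+1), (if i ≤ m then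
          (-1:ℚ)^i * (ℓ.choose i : ℚ) * ((2*b).choose (2*(m-i)) : ℚ) else 0) := by
      rw [sum_subset (by intro x hx; rw [mem_range] at *; omega : range (ℓ+1) ⊆ range (ℓ+m+1))]
      · apply sum_congr rfl
        intro i hi
        have e : 2*m-2*i = 2*(m-i) := by omega
        rw [e]
        exact if_congr (by omega) rfl rfl
      · intro i hi hni
        rw [mem_range] at hi hni
        have : ℓ < i := by omega
        rw [Nat.choose_eq_zero_of_lt this]
        simp
    have right : ∑ i ∈ range (m+1), (-1:ℚ)^i * (ℓ.choose i : ℚ) * ((2*b).choose (2*(m-i)) : ℚ)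
        = ∑ i ∈ range (ℓ+m+1), (if i ≤ m then
          (-1:ℚ)^i * (ℓ.choose i : ℚ) * ((2*b).choose (2*(m-i)) : ℚ) else 0) := by
      have step1 : ∑ i ∈ range (m+1), (-1:ℚ)^i * (ℓ.choose i : ℚ) * ((2*b).choose (2*(m-i)) : ℚ)
          = ∑ i ∈ range (m+1), (if i ≤ m then
            (-1:ℚ)^i * (ℓ.choose i : ℚ) * ((2*b).choose (2*(m-i)) : ℚ) else 0) := by
        apply sum_congr rfl
        intro i hi
        rw [mem_range] at hi
        rw [if_pos (by omega : i ≤ m)]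
      rw [step1]
      apply sum_subset (by intro x hx; rw [mem_range] at *; omega : range (m+1) ⊆ range (ℓ+m+1))
      intro i hi hni
      rw [mem_range] at hi hni
      rw [if_neg (by omega : ¬ i ≤ m)]
    rw [left, right]
  rw [← lhs_eq, hpoly, rhs_eq, conv]

/-- The vanishing of the main double sum `T`. -/
lemma T_eq_zero (n ℓ b : ℕ) (hb : b = n - ℓ) (hℓ : ℓ ≤ n) (hb1 : 1 ≤ b) :
    ∑ m ∈ range (n+1), ∑ i ∈ range (m+1),
      (-1:ℚ)^m * ((-1:ℚ)^i * (ℓ.choose i : ℚ) * ((2*b).choose (2*(m-i)) : ℚ)) * (D m * D (n-m)) = 0 := by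
  have hnb : n = ℓ + b := by omega
  have swap := Finset.sum_Ico_Ico_comm 0 (n+1) (fun i m =>
    (-1:ℚ)^m * ((-1:ℚ)^i * (ℓ.choose i : ℚ) * ((2*b).choose (2*(m-i)) : ℚ)) * (D m * D (n-m)))
  simp only [← Finset.range_eq_Ico] at swap
  rw [← swap]
  have inner_eq : ∀ i ∈ range (n+1), ∑ m ∈ Finset.Ico i (n+1),
      (-1:ℚ)^m * ((-1:ℚ)^i * (ℓ.choose i : ℚ) * ((2*b).choose (2*(m-i)) : ℚ)) * (D m * D (n-m))
      = (ℓ.choose i : ℚ) * ∑ j ∈ range (n+1-i),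
          (-1:ℚ)^j * ((2*b).choose (2*j) : ℚ) * (D (i+j) * D (n-i-j)) := by
    intro i hi
    rw [Finset.sum_Ico_eq_sum_range, mul_sum]
    apply sum_congr rfl
    intro j hj
    rw [mem_range] at hj
    have h1 : i + j - i = j := by omega
    have h2 : n - (i+j) = n - i - j := by omega
    have h3 : (-1:ℚ)^(i+j) = (-1)^i * (-1)^j := by rw [pow_add]
    have h4 : (-1:ℚ)^i * (-1)^i = 1 := by
      rw [← pow_add, ← two_mul, pow_mul, neg_one_sq, one_pow]
    rw [h1, h2, h3]
    linear_combination ((-1:ℚ)^j * (ℓ.choose i : ℚ) * ((2*b).choose (2*j) : ℚ)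
      * (D (i+j) * D (n-i-j))) * h4
  rw [sum_congr rfl inner_eq]
  have trunc_i : ∑ i ∈ range (n+1), (ℓ.choose i : ℚ) * ∑ j ∈ range (n+1-i),
      (-1:ℚ)^j * ((2*b).choose (2*j) : ℚ) * (D (i+j) * D (n-i-j))
      = ∑ i ∈ range (ℓ+1), (ℓ.choose i : ℚ) * ∑ j ∈ range (n+1-i),
      (-1:ℚ)^j * ((2*b).choose (2*j) : ℚ) * (D (i+j) * D (n-i-j)) := by
    symm
    apply sum_subset (by intro x hx; rw [mem_range] at hx ⊢; omega)
    intro i hi hni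
    rw [mem_range] at hi hni
    rw [Nat.choose_eq_zero_of_lt (by omega : ℓ < i)]
    simp
  rw [trunc_i]
  have trunc_j : ∀ i ∈ range (ℓ+1), (ℓ.choose i : ℚ) * ∑ j ∈ range (n+1-i),
      (-1:ℚ)^j * ((2*b).choose (2*j) : ℚ) * (D (i+j) * D (n-i-j))
      = ∑ j ∈ range (b+1),
      (ℓ.choose i : ℚ) * ((-1:ℚ)^j * ((2*b).choose (2*j) : ℚ) * (D (i+j) * D (n-i-j))) := by
    intro i hi
    rw [mem_range] at hi
    rw [mul_sum]
    symm
    apply sum_subset (by intro x hx; rw [mem_range] at hx ⊢; omega)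
    intro j hj hnj
    rw [mem_range] at hj hnj
    rw [Nat.choose_eq_zero_of_lt (by omega : 2*b < 2*j)]
    simp
  rw [sum_congr rfl trunc_j]
  rw [Finset.sum_comm]
  have inner2 : ∀ j ∈ range (b+1),
      ∑ i ∈ range (ℓ+1), (ℓ.choose i : ℚ) * ((-1:ℚ)^j * ((2*b).choose (2*j) : ℚ) * (D (i+j) * D (n-i-j)))
      = ((-1:ℚ)^j * ((2*b).choose (2*j) : ℚ)) * (K ℓ b * (D j * D (b-j))) := by
    intro j hj
    rw [mem_range] at hj
    have hA : A ℓ j (b-j) = K ℓ b * (D j * D (b-j)) := by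
      rw [A_closed]
      congr 2
      omega
    rw [← hA, A, mul_sum]
    apply sum_congr rfl
    intro i hi
    rw [mem_range] at hi
    have h1 : i + j = j + i := by omega
    have h2 : n - i - j = (b-j) + (ℓ - i) := by omega
    rw [h1, h2]
    ring
  rw [sum_congr rfl inner2]
  have : ∑ j ∈ range (b+1),
      ((-1:ℚ)^j * ((2*b).choose (2*j) : ℚ)) * (K ℓ b * (D j * D (b-j)))
      = K ℓ b * Gsum b := by
    rw [Gsum, mul_sum]
    apply sum_congr rfl
    intro j hj
    ring
  rw [this, Gsum_eq_zero b hb1, mul_zero]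

end KernelVectorAux

open Finset KernelVectorAux

theorem kernel_vector (n : ℕ) (hn : 1 ≤ n) (ℓ : ℕ) (hℓ : ℓ ≤ n - 1) :
    ∑ m ∈ Finset.range (n + 1), ∑ k ∈ Finset.range (m + 1),
      (-1 : ℚ) ^ m * (ℓ.choose (2 * k) : ℚ) * ((2 * n - ℓ).choose (2 * (m - k)) : ℚ) *
        (n.choose m : ℚ) / ((2 * n).choose (2 * m) : ℚ) = 0 := by
  have hℓn : ℓ ≤ n := by omega
  set b := n - ℓ with hbdef
  have hb1 : 1 ≤ b := by omega
  -- Step 1: rewrite each m-term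
  have main : ∀ m ∈ range (n+1),
      ∑ k ∈ Finset.range (m + 1),
        (-1 : ℚ) ^ m * (ℓ.choose (2 * k) : ℚ) * ((2 * n - ℓ).choose (2 * (m - k)) : ℚ) *
          (n.choose m : ℚ) / ((2 * n).choose (2 * m) : ℚ)
      = (1/2) * ((-1:ℚ)^m * (n.choose m : ℚ))
        + (1/(2 * D n)) * ((-1:ℚ)^m
            * (∑ i ∈ range (m+1), (-1:ℚ)^i * (ℓ.choose i : ℚ) * ((2*b).choose (2*(m-i)) : ℚ))
            * (D m * D (n-m))) := by
    intro m hm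
    rw [mem_range] at hm
    have hm' : m ≤ n := by omega
    set B : ℚ := ∑ i ∈ range (m+1), (-1:ℚ)^i * (ℓ.choose i : ℚ) * ((2*b).choose (2*(m-i)) : ℚ)
      with hBdef
    set E : ℚ := ∑ k ∈ Finset.range (m + 1),
        (ℓ.choose (2 * k) : ℚ) * ((2 * n - ℓ).choose (2 * (m - k)) : ℚ) with hEdef
    -- factor the inner sum
    have hfact : ∑ k ∈ Finset.range (m + 1),
        (-1 : ℚ) ^ m * (ℓ.choose (2 * k) : ℚ) * ((2 * n - ℓ).choose (2 * (m - k)) : ℚ) *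
          (n.choose m : ℚ) / ((2 * n).choose (2 * m) : ℚ)
        = (-1:ℚ)^m * (n.choose m : ℚ) / ((2 * n).choose (2 * m) : ℚ) * E := by
      rw [hEdef, mul_sum]
      apply sum_congr rfl
      intro k hk
      ring
    rw [hfact]
    -- the even-part Vandermonde step
    have h1 := I1 ℓ (2*n) m (by omega)
    have h2 := I2 n ℓ m hℓn
    have h3 := even_odd_split (fun j => (ℓ.choose j : ℚ) * ((2*n-ℓ).choose (2*m-j) : ℚ)
        + (-1:ℚ)^j * (ℓ.choose j : ℚ) * ((2*n-ℓ).choose (2*m-j) : ℚ)) m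
    rw [sum_add_distrib, h1, h2] at h3
    have hodd : ∑ k ∈ range m,
        ((ℓ.choose (2*k+1) : ℚ) * ((2*n-ℓ).choose (2*m-(2*k+1)) : ℚ)
          + (-1:ℚ)^(2*k+1) * (ℓ.choose (2*k+1) : ℚ) * ((2*n-ℓ).choose (2*m-(2*k+1)) : ℚ)) = 0 := by
      apply sum_eq_zero
      intro k hk
      have : (-1:ℚ)^(2*k+1) = -1 := by
        rw [pow_succ, pow_mul, neg_one_sq, one_pow]; ring
      rw [this]
      ring
    have heven : ∑ k ∈ range (m+1),
        ((ℓ.choose (2*k) : ℚ) * ((2*n-ℓ).choose (2*m-2*k) : ℚ)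
          + (-1:ℚ)^(2*k) * (ℓ.choose (2*k) : ℚ) * ((2*n-ℓ).choose (2*m-2*k) : ℚ)) = 2 * E := by
      rw [hEdef, mul_sum]
      apply sum_congr rfl
      intro k hk
      rw [mem_range] at hk
      have e1 : (-1:ℚ)^(2*k) = 1 := by rw [pow_mul, neg_one_sq, one_pow]
      have e2 : 2*m-2*k = 2*(m-k) := by omega
      rw [e1, e2]
      ring
    rw [hodd, heven, add_zero] at h3
    -- so 2E = choose + B
    have hE2 : 2 * E = ((2*n).choose (2*m) : ℚ) + B := by
      rw [← h3, hBdef]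
    have hC2n : (((2*n).choose (2*m) : ℕ) : ℚ) ≠ 0 := by
      have : 0 < (2*n).choose (2*m) := Nat.choose_pos (by omega)
      exact_mod_cast this.ne'
    have hgD := choose_mul_D n m hm'
    have hDn := D_ne_zero n
    have hEeq : E = (((2*n).choose (2*m) : ℚ) + B)/2 := by linarith
    have hq : (n.choose m : ℚ) / ((2*n).choose (2*m) : ℚ) = D m * D (n-m) / D n := by
      rw [div_eq_div_iff hC2n hDn]
      linear_combination hgD
    rw [hEeq]
    have expand2 : (-1:ℚ)^m * (n.choose m : ℚ) / ((2*n).choose (2*m) : ℚ)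
          * ((((2*n).choose (2*m) : ℚ) + B)/2)
        = 1/2*((-1:ℚ)^m*(n.choose m : ℚ))*(((2*n).choose (2*m) : ℚ)/((2*n).choose (2*m) : ℚ))
          + 1/2*((-1:ℚ)^m*B)*((n.choose m : ℚ)/((2*n).choose (2*m) : ℚ)) := by
      ring
    rw [expand2, div_self hC2n, hq, mul_one]
    field_simp
  rw [sum_congr rfl main, sum_add_distrib, ← mul_sum, ← mul_sum]
  have alt : ∑ m ∈ range (n+1), (-1:ℚ)^m * (n.choose m : ℚ) = 0 := by
    have h := Int.alternating_sum_range_choose_of_ne (by omega : n ≠ 0)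
    have := congrArg (fun z : ℤ => (z : ℚ)) h
    push_cast at this
    rw [← this]
  have hT := T_eq_zero n ℓ b hbdef hℓn hb1
  have hT' : ∑ m ∈ range (n+1), ((-1:ℚ)^m
      * (∑ i ∈ range (m+1), (-1:ℚ)^i * (ℓ.choose i : ℚ) * ((2*b).choose (2*(m-i)) : ℚ))
      * (D m * D (n-m))) = 0 := by
    rw [← hT]
    apply sum_congr rfl
    intro m hm
    rw [mul_sum, sum_mul]
  rw [alt, hT']
  ring
end

section
/- For every natural number n ≥ 1 and every ℓ ∈ {0,...,n-1}, one has ∑_{m=0}^{n} (-1)^m · C(n,m) · ∑_{k=0}^{m} C(2m,2k)·C(2n-2m, ℓ-2k) = 0. -/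
open Polynomial Finset

lemma evenSplit (m : ℕ) :
    ((1 + X : Polynomial ℤ) ^ (2 * m) + (1 - X) ^ (2 * m)) =
      2 * ∑ k ∈ range (m + 1), ((2 * m).choose (2 * k) : Polynomial ℤ) * X ^ (2 * k) := by
  have h1 : (1 + X : Polynomial ℤ) ^ (2 * m) =
      ∑ j ∈ range (2 * m + 1), X ^ j * ((2 * m).choose j : Polynomial ℤ) := by
    rw [add_comm]
    simpa using add_pow (X : Polynomial ℤ) 1 (2 * m)
  have h2 : (1 - X : Polynomial ℤ) ^ (2 * m) =
      ∑ j ∈ range (2 * m + 1), (-1) ^ j * X ^ j * ((2 * m).choose j : Polynomial ℤ) := by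
    have e : (1 - X : Polynomial ℤ) ^ (2 * m) = (X - 1) ^ (2 * m) := by
      rw [← neg_sub, neg_pow, Even.neg_one_pow ⟨m, by ring⟩, one_mul]
    rw [e, sub_pow]
    refine Finset.sum_congr rfl fun j hj => ?_
    have : (-1 : Polynomial ℤ) ^ (j + 2 * m) = (-1) ^ j := by
      rw [pow_add, pow_mul, neg_one_sq, one_pow, mul_one]
    rw [this, one_pow]
    ring
  rw [h1, h2, ← Finset.sum_add_distrib]
  have step : ∑ j ∈ range (2 * m + 1),
      (X ^ j * ((2 * m).choose j : Polynomial ℤ) +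
        (-1) ^ j * X ^ j * ((2 * m).choose j : Polynomial ℤ)) =
      ∑ k ∈ range (m + 1),
      (X ^ (2 * k) * ((2 * m).choose (2 * k) : Polynomial ℤ) +
        (-1) ^ (2 * k) * X ^ (2 * k) * ((2 * m).choose (2 * k) : Polynomial ℤ)) := by
    rw [← Finset.sum_filter_of_ne (p := fun j => Even j)
      (fun j hj hne => by
        by_contra hodd
        apply hne
        have : (-1 : Polynomial ℤ) ^ j = -1 := (Nat.not_even_iff_odd.1 hodd).neg_one_pow
        rw [this]; ring)]
    have himg : (range (2 * m + 1)).filter (fun j => Even j) =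
        (range (m + 1)).image (fun k => 2 * k) := by
      ext j
      simp only [Finset.mem_filter, Finset.mem_range, Finset.mem_image]
      constructor
      · rintro ⟨hj, k, rfl⟩
        exact ⟨k, by omega, by ring⟩
      · rintro ⟨k, hk, rfl⟩
        exact ⟨by omega, ⟨k, by ring⟩⟩
    rw [himg, Finset.sum_image (fun a _ b _ h => by omega)]
  rw [step, Finset.mul_sum]
  refine Finset.sum_congr rfl fun k hk => ?_
  have : (-1 : Polynomial ℤ) ^ (2 * k) = 1 := by
    rw [pow_mul, neg_one_sq, one_pow]
  rw [this]; ring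

lemma coeff_part (N m ℓ : ℕ) :
    (((∑ k ∈ range (m + 1), ((2 * m).choose (2 * k) : Polynomial ℤ) * X ^ (2 * k)) *
        (1 + X) ^ N).coeff ℓ) =
      ∑ k ∈ range (m + 1),
        ((2 * m).choose (2 * k) : ℤ) * (if 2 * k ≤ ℓ then (N.choose (ℓ - 2 * k) : ℤ) else 0) := by
  rw [Finset.sum_mul, Polynomial.finset_sum_coeff]
  refine Finset.sum_congr rfl fun k hk => ?_
  have e : ((2 * m).choose (2 * k) : Polynomial ℤ) * X ^ (2 * k) * (1 + X) ^ N =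
      Polynomial.C ((2 * m).choose (2 * k) : ℤ) * ((1 + X) ^ N * X ^ (2 * k)) := by
    simp only [Polynomial.C_eq_natCast, Nat.cast_ofNat]
    ring
  rw [e, Polynomial.coeff_C_mul, Polynomial.coeff_mul_X_pow']
  split_ifs with h
  · rw [Polynomial.coeff_one_add_X_pow]
  · rw [mul_zero]

lemma polyIdentity (n : ℕ) (hn : 1 ≤ n) :
    ∑ m ∈ range (n + 1), Polynomial.C ((-1 : ℤ) ^ m * (n.choose m : ℤ)) *
        (((1 + X) ^ (2 * m) + (1 - X) ^ (2 * m)) * (1 + X) ^ (2 * (n - m))) =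
      (4 * X : Polynomial ℤ) ^ n := by
  have split : ∀ m, Polynomial.C ((-1 : ℤ) ^ m * (n.choose m : ℤ)) *
      (((1 + X) ^ (2 * m) + (1 - X) ^ (2 * m)) * (1 + X) ^ (2 * (n - m))) =
      Polynomial.C ((-1 : ℤ) ^ m * (n.choose m : ℤ)) * ((1 + X) ^ (2 * m) * (1 + X) ^ (2 * (n - m))) +
      Polynomial.C ((-1 : ℤ) ^ m * (n.choose m : ℤ)) * ((1 - X) ^ (2 * m) * (1 + X) ^ (2 * (n - m))) := by
    intro m; ring
  simp_rw [split]
  rw [Finset.sum_add_distrib]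
  have e1 : ∑ m ∈ range (n + 1), Polynomial.C ((-1 : ℤ) ^ m * (n.choose m : ℤ)) *
      ((1 + X) ^ (2 * m) * (1 + X) ^ (2 * (n - m))) = 0 := by
    have h : ∀ m ∈ range (n + 1),
        Polynomial.C ((-1 : ℤ) ^ m * (n.choose m : ℤ)) *
          ((1 + X) ^ (2 * m) * (1 + X) ^ (2 * (n - m))) =
        Polynomial.C ((-1 : ℤ) ^ m * (n.choose m : ℤ)) * (1 + X) ^ (2 * n) := by
      intro m hm
      rw [Finset.mem_range] at hm
      rw [← pow_add]
      congr 2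
      omega
    rw [Finset.sum_congr rfl h, ← Finset.sum_mul, ← map_sum,
      Int.alternating_sum_range_choose_of_ne (by omega), map_zero, zero_mul]
  have e2 : ∑ m ∈ range (n + 1), Polynomial.C ((-1 : ℤ) ^ m * (n.choose m : ℤ)) *
      ((1 - X) ^ (2 * m) * (1 + X) ^ (2 * (n - m))) = (4 * X) ^ n := by
    have hsub := sub_pow ((1 - X : Polynomial ℤ) ^ 2) ((1 + X) ^ 2) n
    have hx : ((1 - X : Polynomial ℤ) ^ 2 - (1 + X) ^ 2) = -(4 * X) := by ring
    rw [hx] at hsub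
    have key : ∑ m ∈ range (n + 1), Polynomial.C ((-1 : ℤ) ^ m * (n.choose m : ℤ)) *
        ((1 - X) ^ (2 * m) * (1 + X) ^ (2 * (n - m))) =
        (-1) ^ n * ∑ m ∈ range (n + 1),
          (-1 : Polynomial ℤ) ^ (m + n) * ((1 - X) ^ 2) ^ m * ((1 + X) ^ 2) ^ (n - m) *
            (n.choose m : Polynomial ℤ) := by
      rw [Finset.mul_sum]
      refine Finset.sum_congr rfl fun m hm => ?_
      have hsign : (-1 : Polynomial ℤ) ^ n * (-1) ^ (m + n) = (-1) ^ m := by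
        rw [← pow_add]
        have : n + (m + n) = m + 2 * n := by omega
        rw [this, pow_add, pow_mul, neg_one_sq, one_pow, mul_one]
      have hp1 : ((1 - X : Polynomial ℤ) ^ 2) ^ m = (1 - X) ^ (2 * m) := by
        rw [← pow_mul, mul_comm]
      have hp2 : ((1 + X : Polynomial ℤ) ^ 2) ^ (n - m) = (1 + X) ^ (2 * (n - m)) := by
        rw [← pow_mul, mul_comm]
      rw [hp1, hp2, map_mul]
      simp only [map_pow, map_neg, map_one, Polynomial.C_eq_natCast]
      rw [← hsign]
      ring
    rw [key, ← hsub, ← mul_pow]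
    norm_num
  rw [e1, e2, zero_add]

theorem kernel_vector_int (n : ℕ) (hn : 1 ≤ n) (ℓ : ℕ) (hℓ : ℓ ≤ n - 1) :
    ∑ m ∈ Finset.range (n + 1),
      (-1 : ℤ) ^ m * (n.choose m : ℤ) *
        ∑ k ∈ Finset.range (m + 1),
          ((2 * m).choose (2 * k) : ℤ) *
            (if 2 * k ≤ ℓ then ((2 * n - 2 * m).choose (ℓ - 2 * k) : ℤ) else 0) = 0 := by
  have hℓn : ℓ < n := by omega
  have key : ∀ m ∈ Finset.range (n + 1),
      (2 : ℤ) * ((-1 : ℤ) ^ m * (n.choose m : ℤ) *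
        ∑ k ∈ Finset.range (m + 1),
          ((2 * m).choose (2 * k) : ℤ) *
            (if 2 * k ≤ ℓ then ((2 * n - 2 * m).choose (ℓ - 2 * k) : ℤ) else 0)) =
      (Polynomial.C ((-1 : ℤ) ^ m * (n.choose m : ℤ)) *
        (((1 + X) ^ (2 * m) + (1 - X) ^ (2 * m)) * (1 + X) ^ (2 * (n - m)))).coeff ℓ := by
    intro m hm
    rw [Finset.mem_range] at hm
    have hNN : 2 * (n - m) = 2 * n - 2 * m := by omega
    have h2A : ((1 + X : Polynomial ℤ) ^ (2 * m) + (1 - X) ^ (2 * m)) * (1 + X) ^ (2 * (n - m)) =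
        Polynomial.C 2 * ((∑ k ∈ range (m + 1),
          ((2 * m).choose (2 * k) : Polynomial ℤ) * X ^ (2 * k)) * (1 + X) ^ (2 * (n - m))) := by
      rw [evenSplit m, show (Polynomial.C 2 : Polynomial ℤ) = 2 from by norm_num]
      ring
    rw [h2A, Polynomial.coeff_C_mul, Polynomial.coeff_C_mul, coeff_part, hNN]
    ring
  have h2 : (2 : ℤ) * ∑ m ∈ Finset.range (n + 1),
      (-1 : ℤ) ^ m * (n.choose m : ℤ) *
        ∑ k ∈ Finset.range (m + 1),
          ((2 * m).choose (2 * k) : ℤ) *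
            (if 2 * k ≤ ℓ then ((2 * n - 2 * m).choose (ℓ - 2 * k) : ℤ) else 0) = 0 := by
    rw [Finset.mul_sum, Finset.sum_congr rfl key, ← Polynomial.finset_sum_coeff,
      polyIdentity n hn]
    have h4 : (4 * X : Polynomial ℤ) ^ n = Polynomial.C (4 ^ n) * X ^ n := by
      rw [mul_pow, map_pow]
      norm_num
    rw [h4, Polynomial.coeff_C_mul, Polynomial.coeff_X_pow, if_neg (by omega), mul_zero]
  linarith
end

section
/- For all natural numbers n, ℓ with 0 ≤ ℓ ≤ n and all m, the vector identity a_0(n)_m = a_ℓ(n)_m + a_{n-ℓ}(n)_m holds, where a_ℓ(n)_m := ∑_{k=0}^{m} C(ℓ,2k)·C(n-ℓ, 2(m-k)+1). -/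
lemma sum_range_even_odd (m : ℕ) (f : ℕ → ℕ) :
    ∑ k ∈ Finset.range (2 * m + 2), f k =
      (∑ i ∈ Finset.range (m + 1), f (2 * i)) +
      (∑ i ∈ Finset.range (m + 1), f (2 * i + 1)) := by
  induction m with
  | zero => simp [Finset.sum_range_succ]
  | succ m ih =>
      have : 2 * (m + 1) + 2 = (2 * m + 2) + 1 + 1 := by ring
      rw [this, Finset.sum_range_succ, Finset.sum_range_succ, ih,
        Finset.sum_range_succ (fun i => f (2 * i)) (m + 1),
        Finset.sum_range_succ (fun i => f (2 * i + 1)) (m + 1)]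
      rw [show 2 * (m + 1) = 2 * m + 2 from by ring]
      ring

theorem a_symmetry (n ℓ m : ℕ) (h : ℓ ≤ n) :
    (∑ k ∈ Finset.range (m + 1),
        Nat.choose 0 (2 * k) * Nat.choose n (2 * (m - k) + 1)) =
      (∑ k ∈ Finset.range (m + 1),
        Nat.choose ℓ (2 * k) * Nat.choose (n - ℓ) (2 * (m - k) + 1)) +
      (∑ k ∈ Finset.range (m + 1),
        Nat.choose (n - ℓ) (2 * k) * Nat.choose (n - (n - ℓ)) (2 * (m - k) + 1)) := by
  have hL : (∑ k ∈ Finset.range (m + 1),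
      Nat.choose 0 (2 * k) * Nat.choose n (2 * (m - k) + 1)) = n.choose (2 * m + 1) := by
    rw [Finset.sum_eq_single 0]
    · simp
    · intro k _ hk
      rw [Nat.choose_eq_zero_of_lt (by omega), zero_mul]
    · intro hk; simp at hk
  rw [hL, Nat.sub_sub_self h]
  have hn : n = ℓ + (n - ℓ) := by omega
  rw [show n.choose (2*m+1) = (ℓ + (n-ℓ)).choose (2*m+1) by rw [← hn],
    Nat.add_choose_eq, Finset.Nat.sum_antidiagonal_eq_sum_range_succ_mk,
    Nat.succ_eq_add_one, show 2*m+1+1 = 2*m+2 from rfl,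
    sum_range_even_odd m (fun k => ℓ.choose k * (n-ℓ).choose (2*m+1-k))]
  congr 1
  · refine Finset.sum_congr rfl fun i hi => ?_
    simp only [Finset.mem_range] at hi
    have : 2*m+1-2*i = 2*(m-i)+1 := by omega
    rw [this]
  · rw [← Finset.sum_range_reflect]
    refine Finset.sum_congr rfl fun i hi => ?_
    simp only [Finset.mem_range] at hi
    rw [mul_comm]
    congr 1 <;> congr 1 <;> omega
end

section
/- For all natural numbers n, ℓ with ℓ ≤ n, and all m: a_{ℓ+1}(n+1)_m = 2·(-1)^ℓ · ∑_{j=0}^{ℓ} (-1)^j a_j(n)_m − a_0(n)_m if ℓ is even, and a_{ℓ+1}(n+1)_m = 2·(-1)^ℓ · ∑_{j=0}^{ℓ} (-1)^j a_j(n)_m + a_0(n+1)_m if ℓ is odd, where a_ℓ(n)_m := ∑_{k=0}^{m} C(ℓ,2k)·C(n-ℓ, 2(m-k)+1). -/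
/-- `aVec n ℓ m = ∑_{k=0}^{m} C(ℓ,2k)·C(n-ℓ, 2(m-k)+1)` as an integer. -/
def aVec (n ℓ m : ℕ) : ℤ :=
  ∑ k ∈ Finset.range (m + 1),
    (ℓ.choose (2 * k) : ℤ) * ((n - ℓ).choose (2 * (m - k) + 1) : ℤ)

open Finset

lemma split_even_odd (f : ℕ → ℤ) (m : ℕ) :
    ∑ i ∈ range (2*m+1), f i
      = (∑ k ∈ range (m+1), f (2*k)) + ∑ k ∈ range m, f (2*k+1) := by
  induction m with
  | zero => simp
  | succ m ih =>
    have h : 2*(m+1)+1 = (2*m+1) + 1 + 1 := by ring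
    rw [h, Finset.sum_range_succ, Finset.sum_range_succ, ih,
      Finset.sum_range_succ (fun k => f (2*k)) (m+1), Finset.sum_range_succ (fun k => f (2*k+1)) m]
    simp only [show 2*(m+1) = 2*m+1+1 from by ring]
    ring

lemma vandermonde_split (n ℓ m : ℕ) (h : ℓ ≤ n) :
    (∑ k ∈ range (m+1), (ℓ.choose (2*k) : ℤ) * ((n-ℓ).choose (2*(m-k)) : ℤ))
      + (∑ k ∈ range m, (ℓ.choose (2*k+1) : ℤ) * ((n-ℓ).choose (2*(m-k)-1) : ℤ))
      = (n.choose (2*m) : ℤ) := by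
  have hn : n = ℓ + (n - ℓ) := (Nat.add_sub_cancel' h).symm
  have hv : (n.choose (2*m) : ℤ)
      = ∑ i ∈ range (2*m+1), (ℓ.choose i : ℤ) * ((n-ℓ).choose (2*m - i) : ℤ) := by
    conv_lhs => rw [hn, Nat.add_choose_eq,
      Finset.Nat.sum_antidiagonal_eq_sum_range_succ (fun i j => ℓ.choose i * (n-ℓ).choose j)]
    push_cast
    rfl
  rw [hv, split_even_odd]
  congr 1
  · apply Finset.sum_congr rfl
    intro k hk
    have : 2*m - 2*k = 2*(m-k) := by omega
    rw [this]
  · apply Finset.sum_congr rfl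
    intro k hk
    have : 2*m - (2*k+1) = 2*(m-k)-1 := by omega
    rw [this]

lemma aVec_pascal (n ℓ m : ℕ) (h : ℓ ≤ n) :
    aVec (n+1) (ℓ+1) m + aVec (n+1) ℓ m = 2 * aVec n ℓ m + (n.choose (2*m) : ℤ) := by
  have h1 : n + 1 - (ℓ+1) = n - ℓ := by omega
  have h2 : n + 1 - ℓ = (n - ℓ) + 1 := by omega
  unfold aVec
  simp only [h1, h2]
  have e2 : (∑ k ∈ range (m+1), (ℓ.choose (2*k) : ℤ) * (((n-ℓ)+1).choose (2*(m-k)+1) : ℤ))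
      = (∑ k ∈ range (m+1), (ℓ.choose (2*k) : ℤ) * ((n-ℓ).choose (2*(m-k)) : ℤ))
        + ∑ k ∈ range (m+1), (ℓ.choose (2*k) : ℤ) * ((n-ℓ).choose (2*(m-k)+1) : ℤ) := by
    rw [← Finset.sum_add_distrib]
    apply Finset.sum_congr rfl
    intro k _
    rw [Nat.choose_succ_succ]
    push_cast
    ring
  have e1 : (∑ k ∈ range (m+1), ((ℓ+1).choose (2*k) : ℤ) * ((n-ℓ).choose (2*(m-k)+1) : ℤ))
      = (∑ k ∈ range (m+1), (ℓ.choose (2*k) : ℤ) * ((n-ℓ).choose (2*(m-k)+1) : ℤ))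
        + ∑ k ∈ range m, (ℓ.choose (2*k+1) : ℤ) * ((n-ℓ).choose (2*(m-k)-1) : ℤ) := by
    rw [Finset.sum_range_succ', Finset.sum_range_succ']
    have hterm : ∀ k ∈ range m,
        (((ℓ+1).choose (2*(k+1)) : ℤ)) * ((n-ℓ).choose (2*(m-(k+1))+1) : ℤ)
          = ((ℓ.choose (2*(k+1)) : ℤ)) * ((n-ℓ).choose (2*(m-(k+1))+1) : ℤ)
            + ((ℓ.choose (2*k+1) : ℤ)) * ((n-ℓ).choose (2*(m-k)-1) : ℤ) := by
      intro k hk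
      have hk' : k < m := Finset.mem_range.mp hk
      have ha : 2*(m-(k+1))+1 = 2*(m-k)-1 := by omega
      have hb : 2*(k+1) = (2*k+1)+1 := by ring
      rw [ha, hb, Nat.choose_succ_succ]
      push_cast
      ring
    rw [Finset.sum_congr rfl hterm, Finset.sum_add_distrib]
    simp
    ring
  rw [e1, e2]
  have hv := vandermonde_split n ℓ m h
  linarith

lemma aVec_zero (n m : ℕ) : aVec n 0 m = (n.choose (2*m+1) : ℤ) := by
  unfold aVec
  rw [Finset.sum_eq_single 0]
  · simp
  · intro b _ hb0
    have : (0:ℕ).choose (2*b) = 0 := by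
      have : 0 < 2*b := by omega
      exact Nat.choose_eq_zero_of_lt this
    simp [this]
  · intro habs
    exact absurd (Finset.mem_range.mpr (by omega)) habs

theorem a_recursion (n ℓ m : ℕ) (hℓ : ℓ ≤ n) :
    (Even ℓ →
      aVec (n + 1) (ℓ + 1) m =
        2 * (-1 : ℤ) ^ ℓ * (∑ j ∈ Finset.range (ℓ + 1), (-1 : ℤ) ^ j * aVec n j m)
          - aVec n 0 m) ∧
    (Odd ℓ →
      aVec (n + 1) (ℓ + 1) m =
        2 * (-1 : ℤ) ^ ℓ * (∑ j ∈ Finset.range (ℓ + 1), (-1 : ℤ) ^ j * aVec n j m)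
          + aVec (n + 1) 0 m) := by
  have hp : aVec (n+1) 0 m = aVec n 0 m + (n.choose (2*m) : ℤ) := by
    rw [aVec_zero, aVec_zero]
    have : (n+1).choose (2*m+1) = n.choose (2*m) + n.choose (2*m+1) := Nat.choose_succ_succ n (2*m)
    rw [this]
    push_cast
    ring
  induction ℓ with
  | zero =>
    constructor
    · intro _
      have hA := aVec_pascal n 0 m (Nat.zero_le n)
      simp only [zero_add, Finset.sum_range_one, pow_zero, one_mul]
      linarith
    · intro hodd
      simp at hodd
  | succ ℓ ih =>
    obtain ⟨ihE, ihO⟩ := ih (by omega)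
    have hA := aVec_pascal n (ℓ+1) m hℓ
    have hS : ∑ j ∈ Finset.range (ℓ+1+1), (-1:ℤ)^j * aVec n j m
        = (∑ j ∈ Finset.range (ℓ+1), (-1:ℤ)^j * aVec n j m)
          + (-1:ℤ)^(ℓ+1) * aVec n (ℓ+1) m := Finset.sum_range_succ _ _
    rcases Nat.even_or_odd ℓ with he | ho
    · have hE := ihE he
      have hpow : (-1:ℤ)^ℓ = 1 := he.neg_one_pow
      have hpow1 : (-1:ℤ)^(ℓ+1) = -1 := (Even.add_one he).neg_one_pow
      rw [hpow] at hE
      constructor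
      · intro hcontra
        rw [Nat.even_add_one] at hcontra
        exact absurd he hcontra
      · intro _
        rw [hS, hpow1]
        linarith
    · have hO := ihO ho
      have hpow : (-1:ℤ)^ℓ = -1 := ho.neg_one_pow
      have hpow1 : (-1:ℤ)^(ℓ+1) = 1 := (Odd.add_one ho).neg_one_pow
      rw [hpow] at hO
      constructor
      · intro _
        rw [hS, hpow1]
        linarith
      · intro hcontra
        rw [Nat.odd_add_one] at hcontra
        exact absurd ho (by simpa using hcontra)
end
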